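/- arXiv:1708.04999 — 8 statements merged into one kernel-verified Lean document; each statement's English description precedes it below -/
import Mathlib

section
/- Let T be a finite tree with vertex set of size n, let β ≠ 0 be real and λ ∈ (−1,1), and let Σ be the matrix indexed by the vertices of T with Σ_{σ,τ} = β² λ^{d(σ,τ)}. Define the matrix M indexed by the vertices of T by M_{σ,σ} = 1 + λ²(deg(σ) − 1), M_{σ,τ} = −λ when σ and τ are adjacent in T, and M_{σ,τ} = 0 otherwise. Then Σ · M = β²(1 − λ²) · I_n; in particular Σ is invertible and β²(1 − λ²) Σ^{-1} = M. -/
open Matrix BigOperators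

section Aux

variable {V : Type*} [Fintype V] [DecidableEq V]

variable {V : Type*} [Fintype V] [DecidableEq V]

lemma tree_neighbor_dist (G : SimpleGraph V) (hG : G.IsTree) {σ τ : V} (hne : σ ≠ τ) :
    ∃ ρ₀, G.Adj τ ρ₀ ∧ G.dist σ ρ₀ + 1 = G.dist σ τ ∧
      ∀ ρ, G.Adj τ ρ → ρ ≠ ρ₀ → G.dist σ ρ = G.dist σ τ + 1 := by
  have hconn := hG.isConnected
  set d := G.dist σ τ with hd
  have hdpos : 0 < d := hconn.pos_dist_of_ne hne
  obtain ⟨p, hp, hplen⟩ := hconn.exists_path_of_dist τ σ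
  have hplen' : p.length = d := by rw [hplen, SimpleGraph.dist_comm]
  cases p with
  | nil => exact absurd rfl hne.symm
  | cons hadj q =>
    rename_i ρ₀
    have hq : q.IsPath := hp.of_cons
    have hqlen : q.length + 1 = d := by simpa using hplen'
    refine ⟨ρ₀, hadj, ?_, ?_⟩
    · have h1 : G.dist σ ρ₀ ≤ q.length := by
        rw [SimpleGraph.dist_comm]; exact SimpleGraph.dist_le q
      have h2 : d ≤ G.dist σ ρ₀ + 1 := by
        calc d ≤ G.dist σ ρ₀ + G.dist ρ₀ τ := hconn.dist_triangle
        _ = G.dist σ ρ₀ + 1 := by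
              rw [SimpleGraph.dist_eq_one_iff_adj.mpr hadj.symm]
      omega
    · intro ρ hadjρ hρne
      have hub : G.dist σ ρ ≤ d + 1 := by
        calc G.dist σ ρ ≤ G.dist σ τ + G.dist τ ρ := hconn.dist_triangle
        _ = d + 1 := by rw [SimpleGraph.dist_eq_one_iff_adj.mpr hadjρ]
      by_contra hcon
      have hle : G.dist σ ρ ≤ d := by omega
      obtain ⟨r, hr, hrlen⟩ := hconn.exists_path_of_dist σ ρ
      by_cases hτ : τ ∈ r.support
      · have h1 : d ≤ (r.takeUntil τ hτ).length := SimpleGraph.dist_le _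
        have h2 : 1 ≤ (r.dropUntil τ hτ).length := by
          have : G.dist τ ρ ≤ (r.dropUntil τ hτ).length := SimpleGraph.dist_le _
          rw [SimpleGraph.dist_eq_one_iff_adj.mpr hadjρ] at this
          omega
        have h3 := congr_arg SimpleGraph.Walk.length (r.take_spec hτ)
        rw [SimpleGraph.Walk.length_append] at h3
        rw [hrlen] at h3
        omega
      · have hτ' : τ ∉ r.reverse.support := by
          rwa [SimpleGraph.Walk.support_reverse, List.mem_reverse]
        have hw : (SimpleGraph.Walk.cons hadjρ r.reverse).IsPath := by
          rw [SimpleGraph.Walk.cons_isPath_iff]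
          exact ⟨hr.reverse, hτ'⟩
        have := hG.IsAcyclic.path_unique ⟨_, hw⟩ ⟨_, hp⟩
        have heq : (SimpleGraph.Walk.cons hadjρ r.reverse) =
            SimpleGraph.Walk.cons hadj q := congr_arg Subtype.val this
        have := congr_arg SimpleGraph.Walk.support heq
        simp only [SimpleGraph.Walk.support_cons] at this
        have hsup : r.reverse.support = q.support := by simpa using this
        have e1 := SimpleGraph.Walk.support_eq_cons r.reverse
        rw [hsup] at e1
        have h1 : q.support.head? = some ρ := by rw [e1]; rfl
        have h2 : q.support.head? = some ρ₀ := by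
          rw [SimpleGraph.Walk.support_eq_cons q]; rfl
        rw [h2] at h1
        exact hρne (Option.some.inj h1).symm

lemma tree_neighbor_sum (G : SimpleGraph V) [DecidableRel G.Adj] (hG : G.IsTree)
    {σ τ : V} (hne : σ ≠ τ) (lam : ℝ) :
    ∑ ρ ∈ G.neighborFinset τ, lam ^ G.dist σ ρ
      = lam ^ (G.dist σ τ - 1) + ((G.degree τ : ℝ) - 1) * lam ^ (G.dist σ τ + 1) := by
  obtain ⟨ρ₀, hadj, he, hoth⟩ := tree_neighbor_dist G hG hne
  have hρ₀ : ρ₀ ∈ G.neighborFinset τ := by rwa [SimpleGraph.mem_neighborFinset]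
  have hdeg : 1 ≤ G.degree τ := by
    rw [← SimpleGraph.card_neighborFinset_eq_degree]
    exact Finset.card_pos.mpr ⟨ρ₀, hρ₀⟩
  rw [← Finset.add_sum_erase _ _ hρ₀]
  have h1 : G.dist σ ρ₀ = G.dist σ τ - 1 := by omega
  rw [h1]
  congr 1
  have h2 : ∀ ρ ∈ (G.neighborFinset τ).erase ρ₀,
      lam ^ G.dist σ ρ = lam ^ (G.dist σ τ + 1) := by
    intro ρ hρ
    rw [Finset.mem_erase, SimpleGraph.mem_neighborFinset] at hρ
    rw [hoth ρ hρ.2 hρ.1]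
  rw [Finset.sum_congr rfl h2, Finset.sum_const,
    Finset.card_erase_of_mem hρ₀, SimpleGraph.card_neighborFinset_eq_degree,
    nsmul_eq_mul, Nat.cast_sub hdeg, Nat.cast_one]

end Aux

/-- For a finite tree `T`, `β ≠ 0`, `λ ∈ (-1,1)`, and
`Σ_{σ,τ} = β² λ^{d(σ,τ)}`, the matrix `M` with `M_{σ,σ} = 1 + λ²(deg σ − 1)`,
`M_{σ,τ} = −λ` for `σ ∼ τ`, and `0` otherwise satisfies `Σ M = β²(1−λ²) I`;
in particular `Σ` is invertible with `β²(1−λ²) Σ⁻¹ = M`. -/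
theorem rank_two_covariance_inverse {V : Type*} [Fintype V] [DecidableEq V]
    (G : SimpleGraph V) [DecidableRel G.Adj] (hG : G.IsTree)
    (β lam : ℝ) (hβ : β ≠ 0) (hlam : lam ∈ Set.Ioo (-1 : ℝ) 1) :
    let S : Matrix V V ℝ := Matrix.of fun σ τ => β ^ 2 * lam ^ (G.dist σ τ)
    let M : Matrix V V ℝ := Matrix.of fun σ τ =>
      if σ = τ then 1 + lam ^ 2 * ((G.degree σ : ℝ) - 1)
      else if G.Adj σ τ then -lam else 0
    S * M = (β ^ 2 * (1 - lam ^ 2)) • (1 : Matrix V V ℝ) ∧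
    IsUnit S.det ∧
    (β ^ 2 * (1 - lam ^ 2)) • S⁻¹ = M := by
  intro S M
  obtain ⟨hl1, hl2⟩ := hlam
  have hc : β ^ 2 * (1 - lam ^ 2) ≠ 0 := by
    have : lam ^ 2 < 1 := by nlinarith
    have hβ2 : β ^ 2 ≠ 0 := pow_ne_zero _ hβ
    intro h
    rcases mul_eq_zero.mp h with h | h
    · exact hβ2 h
    · nlinarith
  have hSM : S * M = (β ^ 2 * (1 - lam ^ 2)) • (1 : Matrix V V ℝ) := by
    ext σ τ
    rw [Matrix.mul_apply]
    have hsupp : ∀ ρ ∈ (Finset.univ : Finset V),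
        ρ ∉ insert τ (G.neighborFinset τ) → S σ ρ * M ρ τ = 0 := by
      intro ρ _ hρ
      rw [Finset.mem_insert, SimpleGraph.mem_neighborFinset] at hρ
      push_neg at hρ
      have hM : M ρ τ = 0 := by
        simp only [M, Matrix.of_apply, if_neg hρ.1, if_neg (fun h : G.Adj ρ τ => hρ.2 h.symm)]
      rw [hM, mul_zero]
    rw [← Finset.sum_subset (Finset.subset_univ _) hsupp,
      Finset.sum_insert (SimpleGraph.notMem_neighborFinset_self G τ)]
    have hMτ : M τ τ = 1 + lam ^ 2 * ((G.degree τ : ℝ) - 1) := by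
      simp [M]
    have hMρ : ∀ ρ ∈ G.neighborFinset τ, M ρ τ = -lam := by
      intro ρ hρ
      rw [SimpleGraph.mem_neighborFinset] at hρ
      simp only [M, Matrix.of_apply, if_neg hρ.ne', if_pos hρ.symm]
    rw [Finset.sum_congr rfl (fun ρ hρ => by rw [hMρ ρ hρ])]
    simp only [S, Matrix.of_apply]
    rw [← Finset.sum_mul]
    by_cases hστ : σ = τ
    · subst hστ
      have hd : ∀ ρ ∈ G.neighborFinset σ, β ^ 2 * lam ^ G.dist σ ρ = β ^ 2 * lam := by
        intro ρ hρ
        rw [SimpleGraph.mem_neighborFinset] at hρ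
        rw [SimpleGraph.dist_eq_one_iff_adj.mpr hρ, pow_one]
      rw [Finset.sum_congr rfl hd, Finset.sum_const,
        SimpleGraph.card_neighborFinset_eq_degree, hMτ, SimpleGraph.dist_self,
        Matrix.smul_apply, Matrix.one_apply_eq, nsmul_eq_mul, smul_eq_mul, mul_one]
      ring
    · have hdpos : 0 < G.dist σ τ := hG.isConnected.pos_dist_of_ne hστ
      have hsum : ∑ ρ ∈ G.neighborFinset τ, β ^ 2 * lam ^ G.dist σ ρ
          = β ^ 2 * (lam ^ (G.dist σ τ - 1)
            + ((G.degree τ : ℝ) - 1) * lam ^ (G.dist σ τ + 1)) := by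
        rw [← Finset.mul_sum, tree_neighbor_sum G hG hστ]
      rw [hsum, hMτ, Matrix.smul_apply, Matrix.one_apply_ne hστ, smul_zero]
      have hpow : lam ^ (G.dist σ τ - 1) * lam = lam ^ G.dist σ τ := by
        rw [← pow_succ]
        congr 1
        omega
      have hpow2 : lam ^ (G.dist σ τ + 1) * lam = lam ^ G.dist σ τ * lam ^ 2 := by
        rw [← pow_succ]
        rw [← pow_add]
      linear_combination (-(β^2)) * hpow + (-(β^2) * ((G.degree τ : ℝ) - 1)) * hpow2
  refine ⟨hSM, ?_, ?_⟩
  · have hdet := congr_arg Matrix.det hSM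
    rw [Matrix.det_mul, Matrix.smul_one_eq_diagonal, Matrix.det_diagonal] at hdet
    rw [isUnit_iff_ne_zero]
    intro h
    rw [h, zero_mul] at hdet
    exact (pow_ne_zero _ hc) (by simpa using hdet.symm)
  · have hu : IsUnit S.det := by
      have hdet := congr_arg Matrix.det hSM
      rw [Matrix.det_mul, Matrix.smul_one_eq_diagonal, Matrix.det_diagonal] at hdet
      rw [isUnit_iff_ne_zero]
      intro h
      rw [h, zero_mul] at hdet
      exact (pow_ne_zero _ hc) (by simpa using hdet.symm)
    calc (β ^ 2 * (1 - lam ^ 2)) • S⁻¹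
        = S⁻¹ * ((β ^ 2 * (1 - lam ^ 2)) • (1 : Matrix V V ℝ)) := by
          rw [Matrix.mul_smul, Matrix.mul_one]
      _ = S⁻¹ * (S * M) := by rw [hSM]
      _ = M := by rw [← Matrix.mul_assoc, Matrix.nonsing_inv_mul S hu, Matrix.one_mul]
end

section
/- Let T be a finite tree with vertex set of size n ≥ 1, let β ≠ 0 be real and λ ∈ (−1,1), and let Σ be the matrix indexed by the vertices of T with Σ_{σ,τ} = β² λ^{d(σ,τ)}. Then 1^T Σ^{-1} 1 = (n(1 − λ) + 2λ) / (β²(1 + λ)), where 1 is the all-ones vector; equivalently, β²(1 + λ) · 1^T Σ^{-1} 1 = n(1 − λ(1 − 2/n)). -/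
open Matrix BigOperators Finset

namespace RankTwoAux

variable {V : Type*} [DecidableEq V] {G : SimpleGraph V}

lemma dist_le_of_mem_support {σ τ x : V} (W : G.Walk σ τ) (hx : x ∈ W.support) :
    G.dist σ x ≤ W.length :=
  le_trans (SimpleGraph.dist_le (W.takeUntil x hx)) (W.length_takeUntil_le hx)

lemma dist_lt_of_mem_support {σ τ x : V} (W : G.Walk σ τ)
    (hW : W.length = G.dist σ τ) (hx : x ∈ W.support) (hxτ : x ≠ τ) :
    G.dist σ x < G.dist σ τ := by
  have h1 : G.dist σ x ≤ (W.takeUntil x hx).length := SimpleGraph.dist_le _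
  have h2 := congrArg SimpleGraph.Walk.length (W.take_spec hx)
  rw [SimpleGraph.Walk.length_append] at h2
  have h3 : (W.dropUntil x hx).length ≠ 0 := by
    intro h0
    have := SimpleGraph.Walk.eq_of_length_eq_zero h0
    exact hxτ this
  omega

lemma tree_adj_dist (hG : G.IsTree) (σ : V) {u v : V} (h : G.Adj u v) :
    G.dist σ v = G.dist σ u + 1 ∨ G.dist σ u = G.dist σ v + 1 := by
  have hconn := hG.isConnected
  have h1 : G.dist σ v ≤ G.dist σ u + 1 := by
    have := hconn.dist_triangle (u := σ) (v := u) (w := v)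
    rwa [SimpleGraph.dist_eq_one_iff_adj.2 h] at this
  have h2 : G.dist σ u ≤ G.dist σ v + 1 := by
    have := hconn.dist_triangle (u := σ) (v := v) (w := u)
    rwa [SimpleGraph.dist_eq_one_iff_adj.2 h.symm] at this
  have hne : G.dist σ u ≠ G.dist σ v := by
    intro he
    obtain ⟨P, hPl⟩ := hconn.exists_walk_length_eq_dist σ u
    have hP : P.IsPath := P.isPath_of_length_eq_dist hPl
    have hv : v ∉ P.support := by
      intro hvm
      have := dist_lt_of_mem_support P hPl hvm h.ne'
      omega
    have hW' : (P.concat h).IsPath := by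
      rw [← SimpleGraph.Walk.isPath_reverse_iff, SimpleGraph.Walk.reverse_concat,
        SimpleGraph.Walk.cons_isPath_iff]
      refine ⟨hP.reverse, ?_⟩
      simpa [SimpleGraph.Walk.support_reverse] using hv
    obtain ⟨Q, hQl⟩ := hconn.exists_walk_length_eq_dist σ v
    have hQ : Q.IsPath := Q.isPath_of_length_eq_dist hQl
    have := hG.IsAcyclic.path_unique ⟨P.concat h, hW'⟩ ⟨Q, hQ⟩
    have hlen : (P.concat h).length = Q.length := by
      rw [Subtype.ext_iff] at this
      exact congrArg SimpleGraph.Walk.length this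
    rw [SimpleGraph.Walk.length_concat] at hlen
    omega
  omega

/-- unique parent in a tree -/
lemma tree_parent (hG : G.IsTree) (σ : V) {ρ : V} (hρ : ρ ≠ σ) :
    ∃ p, G.Adj ρ p ∧ G.dist σ p + 1 = G.dist σ ρ ∧
      ∀ q, G.Adj ρ q → G.dist σ q + 1 = G.dist σ ρ → q = p := by
  have hconn := hG.isConnected
  have hd : G.dist σ ρ ≠ 0 := by
    rw [Ne, hconn.dist_eq_zero_iff]
    exact fun h => hρ h.symm
  obtain ⟨W, hWl⟩ := hconn.exists_walk_length_eq_dist σ ρ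
  obtain ⟨p, hadj, q, hq⟩ := SimpleGraph.Walk.exists_eq_cons_of_ne hρ W.reverse
  have hql : q.length + 1 = G.dist σ ρ := by
    have := congrArg SimpleGraph.Walk.length hq
    simp only [SimpleGraph.Walk.length_reverse, SimpleGraph.Walk.length_cons] at this
    omega
  have hdp : G.dist σ p + 1 = G.dist σ ρ := by
    have hle : G.dist σ p ≤ q.length := by
      have := SimpleGraph.dist_le q.reverse
      simpa [SimpleGraph.Walk.length_reverse] using this
    have hge : G.dist σ ρ ≤ G.dist σ p + 1 := by
      have := hconn.dist_triangle (u := σ) (v := p) (w := ρ)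
      rwa [SimpleGraph.dist_eq_one_iff_adj.2 hadj.symm] at this
    omega
  -- uniqueness
  refine ⟨p, hadj, hdp, ?_⟩
  have key : ∀ x, G.Adj ρ x → G.dist σ x + 1 = G.dist σ ρ →
      ∃ (P : G.Walk σ ρ), P.IsPath ∧ ∃ (P' : G.Walk σ x) (h' : G.Adj x ρ),
        P = P'.concat h' := by
    intro x hx hdx
    obtain ⟨P', hP'l⟩ := hconn.exists_walk_length_eq_dist σ x
    have hP' : P'.IsPath := P'.isPath_of_length_eq_dist hP'l
    have hρP : ρ ∉ P'.support := by
      intro hm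
      have := dist_le_of_mem_support P' hm
      omega
    refine ⟨P'.concat hx.symm, ?_, P', hx.symm, rfl⟩
    rw [← SimpleGraph.Walk.isPath_reverse_iff, SimpleGraph.Walk.reverse_concat,
      SimpleGraph.Walk.cons_isPath_iff]
    refine ⟨hP'.reverse, ?_⟩
    simpa [SimpleGraph.Walk.support_reverse] using hρP
  intro x hx hdx
  obtain ⟨P1, hP1, P1', h1', he1⟩ := key x hx hdx
  obtain ⟨P2, hP2, P2', h2', he2⟩ := key p hadj hdp
  have := hG.IsAcyclic.path_unique ⟨P1, hP1⟩ ⟨P2, hP2⟩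
  rw [Subtype.ext_iff] at this
  simp only at this
  rw [he1, he2] at this
  obtain ⟨hv, -⟩ := SimpleGraph.Walk.concat_inj this
  exact hv

end RankTwoAux

namespace RankTwoAux

variable {V : Type*} [Fintype V] [DecidableEq V] {G : SimpleGraph V} [DecidableRel G.Adj]

lemma neighbor_sum_eq (hG : G.IsTree) (lam : ℝ) (σ : V) {ρ : V} (hρ : ρ ≠ σ) :
    lam * ∑ τ ∈ G.neighborFinset ρ, lam ^ (G.dist σ τ)
      = lam ^ (G.dist σ ρ) + ((G.degree ρ : ℝ) - 1) * lam ^ (G.dist σ ρ + 2) := by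
  obtain ⟨p, hadj, hdp, huniq⟩ := tree_parent hG σ hρ
  have hpmem : p ∈ G.neighborFinset ρ := by
    simpa [SimpleGraph.mem_neighborFinset] using hadj
  have hdegpos : 1 ≤ G.degree ρ := by
    rw [← SimpleGraph.card_neighborFinset_eq_degree]
    exact Finset.card_pos.mpr ⟨p, hpmem⟩
  have hrest : ∀ τ ∈ (G.neighborFinset ρ).erase p, G.dist σ τ = G.dist σ ρ + 1 := by
    intro τ hτ
    obtain ⟨hne, hmem⟩ := Finset.mem_erase.mp hτ
    have hadjτ : G.Adj ρ τ := (SimpleGraph.mem_neighborFinset _ _ _).mp hmem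
    rcases tree_adj_dist hG σ hadjτ with h | h
    · exact h
    · exact absurd (huniq τ hadjτ h.symm) hne
  have hsum : ∑ τ ∈ (G.neighborFinset ρ).erase p, lam ^ (G.dist σ τ)
      = ((G.degree ρ : ℝ) - 1) * lam ^ (G.dist σ ρ + 1) := by
    rw [Finset.sum_congr rfl (fun τ hτ => by rw [hrest τ hτ]), Finset.sum_const,
      Finset.card_erase_of_mem hpmem, nsmul_eq_mul]
    rw [SimpleGraph.card_neighborFinset_eq_degree, Nat.cast_sub hdegpos, Nat.cast_one]
  rw [← Finset.add_sum_erase _ _ hpmem, hsum, ← hdp]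
  ring

lemma neighbor_sum_self (lam : ℝ) (σ : V) :
    ∑ τ ∈ G.neighborFinset σ, lam ^ (G.dist σ τ) = (G.degree σ : ℝ) * lam := by
  rw [Finset.sum_congr rfl
      (fun τ hτ => by
        rw [SimpleGraph.dist_eq_one_iff_adj.2 ((SimpleGraph.mem_neighborFinset _ _ _).mp hτ)]),
    Finset.sum_const, SimpleGraph.card_neighborFinset_eq_degree]
  simp [nsmul_eq_mul]

end RankTwoAux




/-- For a finite tree `T` on `n ≥ 1` vertices, `β ≠ 0`, `λ ∈ (-1,1)`,
and `Σ_{σ,τ} = β² λ^{d(σ,τ)}`, one has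
`1ᵀ Σ⁻¹ 1 = (n(1−λ) + 2λ)/(β²(1+λ))`; equivalently
`β²(1+λ) · 1ᵀ Σ⁻¹ 1 = n(1 − λ(1 − 2/n))`. -/
theorem rank_two_gls_precision {V : Type*} [Fintype V] [DecidableEq V]
    (G : SimpleGraph V) (hG : G.IsTree)
    (β lam : ℝ) (hβ : β ≠ 0) (hlam : lam ∈ Set.Ioo (-1 : ℝ) 1) :
    let n : ℕ := Fintype.card V
    let S : Matrix V V ℝ := Matrix.of fun σ τ => β ^ 2 * lam ^ (G.dist σ τ)
    ((fun _ => (1 : ℝ)) ⬝ᵥ (S⁻¹ *ᵥ fun _ => (1 : ℝ))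
        = ((n : ℝ) * (1 - lam) + 2 * lam) / (β ^ 2 * (1 + lam))) ∧
    (β ^ 2 * (1 + lam) * ((fun _ => (1 : ℝ)) ⬝ᵥ (S⁻¹ *ᵥ fun _ => (1 : ℝ)))
        = (n : ℝ) * (1 - lam * (1 - 2 / (n : ℝ)))) := by
  intro n S
  haveI : DecidableRel G.Adj := Classical.decRel _
  obtain ⟨hlam1, hlam2⟩ := hlam
  have h1p : (0:ℝ) < 1 + lam := by linarith
  have h1m : (0:ℝ) < 1 - lam := by linarith
  have hsq : (1:ℝ) - lam ^ 2 ≠ 0 := by nlinarith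
  have hβ2 : (β:ℝ) ^ 2 ≠ 0 := pow_ne_zero 2 hβ
  have hne : Nonempty V := hG.isConnected.nonempty
  have hn1 : 1 ≤ n := Fintype.card_pos
  have hn0 : (n:ℝ) ≠ 0 := by positivity
  set c : ℝ := (β ^ 2 * (1 - lam ^ 2))⁻¹ with hc
  have hcinv : β ^ 2 * (1 - lam ^ 2) * c = 1 :=
    mul_inv_cancel₀ (mul_ne_zero hβ2 hsq)
  set A : V → ℝ := fun ρ => 1 + ((G.degree ρ : ℝ) - 1) * lam ^ 2 with hA
  set Q : Matrix V V ℝ := Matrix.of fun τ ρ =>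
    c * ((if τ = ρ then A ρ else 0) - lam * (if G.Adj τ ρ then 1 else 0)) with hQ
  have hfilter : ∀ ρ : V, univ.filter (fun τ => G.Adj τ ρ) = G.neighborFinset ρ := by
    intro ρ; ext τ
    simp [SimpleGraph.mem_neighborFinset, SimpleGraph.adj_comm]
  have hentry : ∀ σ ρ, (S * Q) σ ρ =
      β ^ 2 * c * lam ^ (G.dist σ ρ) * A ρ
        - β ^ 2 * c * lam * ∑ τ ∈ G.neighborFinset ρ, lam ^ (G.dist σ τ) := by
    intro σ ρ
    have hterm : ∀ τ : V, S σ τ * Q τ ρ =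
        (if τ = ρ then β ^ 2 * c * lam ^ (G.dist σ ρ) * A ρ else 0)
          - β ^ 2 * c * lam * (if G.Adj τ ρ then lam ^ (G.dist σ τ) else 0) := by
      intro τ
      simp only [S, Q, Matrix.of_apply]
      by_cases h1 : τ = ρ
      · subst h1
        rw [if_pos rfl, if_pos rfl, if_neg (G.irrefl), if_neg (G.irrefl)]
        ring
      · by_cases h2 : G.Adj τ ρ <;> simp [h1, h2] <;> ring
    rw [Matrix.mul_apply, Finset.sum_congr rfl (fun τ _ => hterm τ),
      Finset.sum_sub_distrib, Finset.sum_ite_eq' univ ρ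
        (fun _ => β ^ 2 * c * lam ^ (G.dist σ ρ) * A ρ),
      ← Finset.mul_sum, ← Finset.sum_filter, hfilter ρ]
    simp
  have hSQ : S * Q = 1 := by
    ext σ ρ
    rw [hentry σ ρ]
    by_cases hρσ : ρ = σ
    · subst hρσ
      have hself : ∑ τ ∈ G.neighborFinset ρ, lam ^ (G.dist ρ τ)
          = (G.degree ρ : ℝ) * lam := by
        rw [Finset.sum_congr rfl
            (fun τ hτ => by
              rw [SimpleGraph.dist_eq_one_iff_adj.2
                ((SimpleGraph.mem_neighborFinset _ _ _).mp hτ)]),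
          Finset.sum_const, SimpleGraph.card_neighborFinset_eq_degree]
        simp [nsmul_eq_mul]
      rw [hself, Matrix.one_apply_eq, SimpleGraph.dist_self]
      simp only [hA, pow_zero]
      linear_combination hcinv
    · have hmul := RankTwoAux.neighbor_sum_eq (G := G) hG lam σ hρσ
      rw [Matrix.one_apply_ne (fun h => hρσ h.symm)]
      have : β ^ 2 * c * lam * ∑ τ ∈ G.neighborFinset ρ, lam ^ (G.dist σ τ)
          = β ^ 2 * c * (lam ^ (G.dist σ ρ)
            + ((G.degree ρ : ℝ) - 1) * lam ^ (G.dist σ ρ + 2)) := by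
        rw [mul_assoc, hmul]
      rw [this]
      simp only [hA]
      ring
  have hinv : S⁻¹ = Q := Matrix.inv_eq_right_inv hSQ
  have hform : (fun _ => (1 : ℝ)) ⬝ᵥ (S⁻¹ *ᵥ fun _ => (1 : ℝ)) = ∑ σ, ∑ ρ, Q σ ρ := by
    rw [hinv]
    simp [dotProduct, Matrix.mulVec]
  have hdegQ : ∀ σ : V, ∑ ρ, (if G.Adj σ ρ then (1:ℝ) else 0) = (G.degree σ : ℝ) := by
    intro σ
    rw [Finset.sum_boole]
    congr 1
    rw [← SimpleGraph.card_neighborFinset_eq_degree]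
    congr 1
    ext τ; simp [SimpleGraph.mem_neighborFinset]
  have hrow : ∀ σ : V, ∑ ρ, Q σ ρ = c * (A σ - lam * (G.degree σ : ℝ)) := by
    intro σ
    simp only [Q, Matrix.of_apply]
    rw [← Finset.mul_sum, Finset.sum_sub_distrib, Finset.sum_ite_eq univ σ A,
      ← Finset.mul_sum, hdegQ σ]
    simp
  have hQsum : ∑ σ, ∑ ρ, Q σ ρ
      = c * ((∑ σ, A σ) - lam * ∑ σ, (G.degree σ : ℝ)) := by
    rw [Finset.sum_congr rfl (fun σ _ => hrow σ), ← Finset.mul_sum]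
    congr 1
    rw [Finset.sum_sub_distrib, ← Finset.mul_sum]
  have hdeg : ∑ σ, (G.degree σ : ℝ) = 2 * ((n:ℝ) - 1) := by
    have h1 : ∑ σ, G.degree σ = 2 * G.edgeFinset.card :=
      SimpleGraph.sum_degrees_eq_twice_card_edges G
    have h2 : G.edgeFinset.card + 1 = n := hG.card_edgeFinset
    have : ∑ σ, G.degree σ = 2 * (n - 1) := by omega
    rw [← Nat.cast_sum]  
    rw [this]
    push_cast [Nat.cast_sub hn1]
    ring
  have hAsum : ∑ σ, A σ = (n:ℝ) + (2 * ((n:ℝ) - 1) - n) * lam ^ 2 := by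
    simp only [hA]
    rw [Finset.sum_add_distrib, Finset.sum_const, Finset.card_univ, ← Finset.sum_mul,
      Finset.sum_sub_distrib, hdeg, Finset.sum_const, Finset.card_univ]
    simp only [nsmul_eq_mul, mul_one, smul_eq_mul]
    try ring
  have hmain : (fun _ => (1 : ℝ)) ⬝ᵥ (S⁻¹ *ᵥ fun _ => (1 : ℝ))
      = ((n : ℝ) * (1 - lam) + 2 * lam) / (β ^ 2 * (1 + lam)) := by
    rw [hform, hQsum, hdeg, hAsum, hc,
      eq_div_iff (by positivity : (β ^ 2 * (1 + lam)) ≠ 0)]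
    field_simp
    ring
  refine ⟨hmain, ?_⟩
  rw [hmain]
  field_simp
  ring
end

section
/- Fix real numbers β ≠ 0 and λ ∈ (−1,1). For each n ≥ 1 let T_n be a finite tree with n vertices and let Σ_n be the matrix indexed by the vertices of T_n with (Σ_n)_{σ,τ} = β² λ^{d(σ,τ)}. Then n · (1^T Σ_n^{-1} 1)^{-1} converges to ((1 + λ)/(1 − λ)) · β² as n → ∞. In particular, under a rank-two model, n times the variance of the GLS estimator converges to ((1 + λ)/(1 − λ)) β². -/
open Matrix BigOperators Filter

/-!
For a tree and `x² ≠ 1`, the matrix `Λ = (x ^ d(u, v))` has the explicit inverse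
`(1 - x²)⁻¹ (I - x A + x² (D - I))`, with `A` the adjacency and `D` the degree matrix. Checking
`Λ (I - x A + x² (D - I)) = (1 - x²) I` entrywise comes down to the fact that for `u ≠ v`
exactly one neighbour of `v` is closer to `u` than `v`, and all others are one step farther.
Summing the entries of the inverse with `∑ deg = 2 (n - 1)` gives
`1ᵀ Σₙ⁻¹ 1 = (n (1 - λ) + 2 λ) / ((1 + λ) β²)`, which grows like `n (1 - λ) / ((1 + λ) β²)`.
-/

/-- Also true for `c = 0` and for singular `A`, where both sides are `0`. -/
lemma Matrix.inv_smul₀ {n K : Type*} [Fintype n] [DecidableEq n] [Field K] (c : K)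
    (A : Matrix n n K) : (c • A)⁻¹ = c⁻¹ • A⁻¹ := by
  obtain rfl | hc := eq_or_ne c 0
  · simp
  by_cases hA : IsUnit A.det
  · exact inv_eq_left_inv (by simp [hc, smul_smul, nonsing_inv_mul A hA])
  · have hcA : ¬IsUnit (c • A).det := by
      simpa [isUnit_iff_ne_zero, det_smul, hc] using hA
    rw [nonsing_inv_apply_not_isUnit _ hA, nonsing_inv_apply_not_isUnit _ hcA, smul_zero]

lemma tendsto_natCast_mul_add_div_natCast (a b : ℝ) :
    Tendsto (fun n : ℕ => (n * a + b) / n) atTop (nhds a) := by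
  have h := tendsto_const_nhds (x := a) |>.add (tendsto_const_div_atTop_nhds_zero_nat b)
  rw [add_zero] at h
  refine h.congr' ?_
  filter_upwards [eventually_ne_atTop 0] with n hn
  field_simp

namespace SimpleGraph

variable {V : Type*} {G : SimpleGraph V} {u v : V}

lemma Connected.exists_adj_dist_add_one (hG : G.Connected) (huv : u ≠ v) :
    ∃ w, G.Adj v w ∧ G.dist u w + 1 = G.dist u v := by
  obtain ⟨p, -, hp⟩ := hG.exists_path_of_dist v u
  cases p with
  | nil => exact absurd rfl huv
  | @cons _ w _ hadj q =>
    refine ⟨w, hadj, ?_⟩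
    have hle : G.dist w u ≤ q.length := dist_le q
    have htri : G.dist v u ≤ G.dist v w + G.dist w u := hG.dist_triangle
    rw [dist_eq_one_iff_adj.mpr hadj] at htri
    rw [Walk.length_cons] at hp
    rw [dist_comm (u := u), dist_comm (u := u)]
    omega

lemma IsTree.eq_of_adj_of_dist_add_one (hG : G.IsTree) {w₁ w₂ : V} (h₁ : G.Adj v w₁)
    (h₂ : G.Adj v w₂) (hd₁ : G.dist u w₁ + 1 = G.dist u v) (hd₂ : G.dist u w₂ + 1 = G.dist u v) :
    w₁ = w₂ := by
  have hpath : ∀ w (h : G.Adj v w), G.dist u w + 1 = G.dist u v →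
      ∃ p : G.Walk v u, p.IsPath ∧ p.snd = w := by
    intro w h hd
    obtain ⟨q, hq⟩ := hG.connected.exists_walk_length_eq_dist w u
    refine ⟨.cons h q, Walk.isPath_of_length_eq_dist _ ?_, Walk.snd_cons q h⟩
    rw [Walk.length_cons, hq, dist_comm, hd, dist_comm]
  obtain ⟨p₁, hp₁, rfl⟩ := hpath w₁ h₁ hd₁
  obtain ⟨p₂, hp₂, rfl⟩ := hpath w₂ h₂ hd₂
  rw [(hG.existsUnique_path v u).unique hp₁ hp₂]

lemma sum_neighborFinset_pow_dist_self [Fintype (G.neighborSet v)] {R : Type*} [CommSemiring R]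
    (x : R) : ∑ w ∈ G.neighborFinset v, x ^ G.dist v w = G.degree v * x := by
  rw [Finset.sum_congr rfl fun w hw => by
    rw [dist_eq_one_iff_adj.mpr ((mem_neighborFinset G v w).mp hw), pow_one]]
  simp [card_neighborFinset_eq_degree]

lemma IsTree.mul_sum_neighborFinset_pow_dist [Fintype (G.neighborSet v)] {R : Type*} [CommRing R]
    (hG : G.IsTree) (huv : u ≠ v) (x : R) :
    x * ∑ w ∈ G.neighborFinset v, x ^ G.dist u w
      = x ^ G.dist u v + (G.degree v - 1) * x ^ (G.dist u v + 2) := by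
  classical
  obtain ⟨p, hp, hdp⟩ := hG.connected.exists_adj_dist_add_one huv
  have hpmem : p ∈ G.neighborFinset v := (mem_neighborFinset G v p).mpr hp
  have hchild : ∀ w ∈ (G.neighborFinset v).erase p, x ^ G.dist u w = x ^ (G.dist u v + 1) := by
    intro w hw
    obtain ⟨hwp, hw⟩ := Finset.mem_erase.mp hw
    rw [mem_neighborFinset] at hw
    obtain hd | hd := hG.dist_eq_dist_add_one_of_adj u hw
    · exact absurd (hG.eq_of_adj_of_dist_add_one hw hp hd.symm hdp) hwp
    · rw [hd]
  have hdeg : 1 ≤ G.degree v := Finset.card_pos.mpr ⟨p, hpmem⟩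
  rw [← Finset.add_sum_erase _ _ hpmem, Finset.sum_congr rfl hchild, Finset.sum_const,
    Finset.card_erase_of_mem hpmem, card_neighborFinset_eq_degree, nsmul_eq_mul,
    Nat.cast_sub hdeg, ← hdp]
  ring

lemma IsTree.sum_degree_add_two [Fintype V] [DecidableRel G.Adj] (hG : G.IsTree) :
    ∑ v, G.degree v + 2 = 2 * Fintype.card V := by
  rw [sum_degrees_eq_twice_card_edges, ← hG.card_edgeFinset]
  ring

variable (G) in
noncomputable def distPowMatrix {R : Type*} [CommRing R] (x : R) : Matrix V V R :=
  of fun u v => x ^ G.dist u v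

section TreePrecision

variable [Fintype V] [DecidableEq V] [DecidableRel G.Adj] {R : Type*} [CommRing R]

variable (G) in
def treePrecisionMatrix (x : R) : Matrix V V R :=
  1 - x • G.adjMatrix R + x ^ 2 • (G.degMatrix R - 1)

lemma IsTree.distPowMatrix_mul_treePrecisionMatrix (hG : G.IsTree) (x : R) :
    G.distPowMatrix x * G.treePrecisionMatrix x = (1 - x ^ 2) • 1 := by
  ext u v
  simp only [treePrecisionMatrix, degMatrix, Matrix.mul_add, Matrix.mul_sub, Matrix.mul_smul,
    Matrix.mul_one, Matrix.add_apply, Matrix.sub_apply, Matrix.smul_apply, mul_adjMatrix_apply,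
    mul_diagonal, Matrix.one_apply, smul_eq_mul]
  simp only [distPowMatrix, of_apply]
  obtain rfl | huv := eq_or_ne u v
  · rw [sum_neighborFinset_pow_dist_self, dist_self, if_pos rfl]
    ring
  · rw [if_neg huv]
    linear_combination -hG.mul_sum_neighborFinset_pow_dist huv x

lemma IsTree.one_dotProduct_treePrecisionMatrix_mulVec_one (hG : G.IsTree) (x : R) :
    1 ⬝ᵥ (G.treePrecisionMatrix x *ᵥ 1) = (1 - x) * (Fintype.card V * (1 - x) + 2 * x) := by
  have hdeg : (∑ v, G.degree v : R) + 2 = 2 * Fintype.card V := by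
    exact_mod_cast congrArg (Nat.cast (R := R)) hG.sum_degree_add_two
  simp only [treePrecisionMatrix, add_mulVec, sub_mulVec, smul_mulVec, one_mulVec,
    dotProduct_add, dotProduct_sub, dotProduct_smul, one_dotProduct]
  simp only [← Function.const_one, adjMatrix_mulVec_const_apply, degMatrix_mulVec_apply,
    Function.const_apply, mul_one, Finset.sum_const, Finset.card_univ, nsmul_eq_mul, smul_eq_mul]
  linear_combination (x ^ 2 - x) * hdeg

lemma IsTree.inv_distPowMatrix {K : Type*} [Field K] (hG : G.IsTree) {x : K}
    (hx : 1 - x ^ 2 ≠ 0) : (G.distPowMatrix x)⁻¹ = (1 - x ^ 2)⁻¹ • G.treePrecisionMatrix x :=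
  inv_eq_right_inv <| by
    rw [Matrix.mul_smul, hG.distPowMatrix_mul_treePrecisionMatrix, smul_smul, inv_mul_cancel₀ hx,
      one_smul]

end TreePrecision

lemma IsTree.one_dotProduct_inv_distPowMatrix_mulVec_one [Fintype V] [DecidableEq V]
    {K : Type*} [Field K] (hG : G.IsTree) {x : K} (hx₁ : 1 + x ≠ 0) (hx₂ : 1 - x ≠ 0) :
    1 ⬝ᵥ ((G.distPowMatrix x)⁻¹ *ᵥ 1) = (Fintype.card V * (1 - x) + 2 * x) / (1 + x) := by
  classical
  have hx : 1 - x ^ 2 ≠ 0 := by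
    rw [show 1 - x ^ 2 = (1 + x) * (1 - x) by ring]
    exact mul_ne_zero hx₁ hx₂
  rw [hG.inv_distPowMatrix hx, smul_mulVec, dotProduct_smul,
    hG.one_dotProduct_treePrecisionMatrix_mulVec_one, smul_eq_mul]
  field_simp
  ring

end SimpleGraph

theorem rank_two_gls_variance_limit_general (β lam : ℝ)
    (hlam : lam ∈ Set.Ioo (-1 : ℝ) 1)
    (G : (n : ℕ) → SimpleGraph (Fin n)) (hG : ∀ n, 1 ≤ n → (G n).IsTree) :
    Tendsto
      (fun n : ℕ => (n : ℝ) *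
        ((fun _ => (1 : ℝ)) ⬝ᵥ
          ((Matrix.of fun σ τ : Fin n => β ^ 2 * lam ^ ((G n).dist σ τ))⁻¹
            *ᵥ fun _ => (1 : ℝ)))⁻¹)
      atTop (nhds ((1 + lam) / (1 - lam) * β ^ 2)) := by
  obtain ⟨hlam₁, hlam₂⟩ := hlam
  have hx₁ : 1 + lam ≠ 0 := by linarith
  have hx₂ : 1 - lam ≠ 0 := by linarith
  have hlim : Tendsto (fun n : ℕ => β ^ 2 * ((n * (1 - lam) + 2 * lam) / n / (1 + lam))⁻¹)
      atTop (nhds ((1 + lam) / (1 - lam) * β ^ 2)) := by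
    have h := (((tendsto_natCast_mul_add_div_natCast (1 - lam) (2 * lam)).div_const
      (1 + lam)).inv₀ (div_ne_zero hx₂ hx₁)).const_mul (β ^ 2)
    rwa [inv_div, mul_comm (β ^ 2)] at h
  refine hlim.congr' ?_
  filter_upwards [eventually_ge_atTop 1] with n hn
  change _ = (n : ℝ) * (1 ⬝ᵥ ((β ^ 2 • (G n).distPowMatrix lam)⁻¹ *ᵥ 1))⁻¹
  rw [Matrix.inv_smul₀, smul_mulVec, dotProduct_smul, smul_eq_mul,
    (hG n hn).one_dotProduct_inv_distPowMatrix_mulVec_one hx₁ hx₂, Fintype.card_fin]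
  simp only [mul_inv, inv_inv, div_eq_mul_inv]
  ring

/-- Fix `β ≠ 0` and `λ ∈ (-1,1)`. For each `n ≥ 1`, let `T_n` be a tree
on `n` vertices and `Σ_n` the matrix with entries `β² λ^{d(σ,τ)}`. Then
`n · (1ᵀ Σ_n⁻¹ 1)⁻¹ → ((1+λ)/(1−λ)) β²` as `n → ∞`: under a rank-two model,
`n` times the variance of the GLS estimator converges to `((1+λ)/(1−λ)) β²`. -/
theorem rank_two_gls_variance_limit (β lam : ℝ) (hβ : β ≠ 0)
    (hlam : lam ∈ Set.Ioo (-1 : ℝ) 1)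
    (G : (n : ℕ) → SimpleGraph (Fin n)) (hG : ∀ n, 1 ≤ n → (G n).IsTree) :
    Tendsto
      (fun n : ℕ => (n : ℝ) *
        ((fun _ => (1 : ℝ)) ⬝ᵥ
          ((Matrix.of fun σ τ : Fin n => β ^ 2 * lam ^ ((G n).dist σ τ))⁻¹
            *ᵥ fun _ => (1 : ℝ)))⁻¹)
      atTop (nhds ((1 + lam) / (1 - lam) * β ^ 2)) :=
  rank_two_gls_variance_limit_general β lam hlam G hG
end

section
/- Fix K ≥ 2, real numbers β_2,…,β_K, and λ_2,…,λ_K ∈ (−1,1), and define γ(d) = Σ_{ℓ=2}^K β_ℓ² λ_ℓ^d for integers d ≥ 0. For each depth H ≥ 1, let T_H be the complete binary tree with n = 2^{H+1} − 1 vertices, and let Σ_H be the matrix indexed by the vertices of T_H with entries (Σ_H)_{σ,τ} = γ(d(σ,τ)); assume each Σ_H is positive definite. Then there exists a constant C > 0, depending only on the β_ℓ and λ_ℓ, such that (1^T Σ_H^{-1} 1)^{-1} ≤ C/n for all H. That is, the variance of the GLS estimator decays like O(n^{-1}). -/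
/-!
The test vector `w` applies at every leaf `u` the filter `∏ ℓ, (1 - λ_ℓ S)`, where `S` moves to
the parent: it puts weight `∏ ℓ ∈ A, (-λ_ℓ)` on the ancestor of `u` at height `#A`. Since
`∑ A, (∏ ℓ ∈ A, -λ_ℓ) λ ^ (D - #A) = λ ^ (D - K + 1) ∏ ℓ, (λ - λ_ℓ)` vanishes at every `λ = λ_ℓ`,
the filtered observations at two leaves are uncorrelated as soon as their last common ancestor
lies at least `K - 1` levels above them, so each leaf has at most `2 ^ (K - 1)` correlated
partners. Hence `wᵀ Σ w = O(#leaves)` while `wᵀ 1 = #leaves * ∏ ℓ, (1 - λ_ℓ)`, and Cauchy–Schwarz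
for the inner product defined by `Σ` gives `(1ᵀ Σ⁻¹ 1)⁻¹ ≤ wᵀ Σ w / (wᵀ 1) ^ 2 = O(1 / #leaves)`.
-/

open Matrix BigOperators

/-- The vertices of the complete binary tree of depth `H`:
binary strings of length at most `H`. -/
def CBTVertex (H : ℕ) : Type := {l : List Bool // l.length ≤ H}

instance (H : ℕ) : DecidableEq (CBTVertex H) := by
  unfold CBTVertex; infer_instance

noncomputable instance (H : ℕ) : Fintype (CBTVertex H) :=
  @Fintype.ofFinite _ ((List.finite_length_le Bool H).to_subtype)

/-- The complete binary tree of depth `H`: each string of length less than `H`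
is joined by an edge to its two one-symbol extensions. -/
def completeBinaryTree (H : ℕ) : SimpleGraph (CBTVertex H) where
  Adj a b := (∃ x : Bool, b.val = x :: a.val) ∨
             (∃ x : Bool, a.val = x :: b.val)
  symm := ⟨fun a b h => Or.symm h⟩
  loopless := ⟨fun a h => by
    rcases h with ⟨x, hx⟩ | ⟨x, hx⟩ <;> exact (List.cons_ne_self x _) hx.symm⟩

namespace List

variable {α : Type*} [DecidableEq α]

def commonPrefix : List α → List α → List α
  | a :: as, b :: bs => if a = b then a :: commonPrefix as bs else []
  | _, _ => []

theorem prefix_commonPrefix_iff {s : List α} :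
    ∀ {l t : List α}, s <+: commonPrefix l t ↔ s <+: l ∧ s <+: t
  | [], _ => by cases s <;> simp [commonPrefix]
  | _ :: _, [] => by cases s <;> simp [commonPrefix]
  | a :: as, b :: bs => by
    rcases s with _ | ⟨c, cs⟩
    · simp
    · by_cases hab : a = b
      · subst hab
        simp only [commonPrefix, ↓reduceIte, cons_prefix_cons, prefix_commonPrefix_iff]
        tauto
      · simp only [commonPrefix, hab, if_false, prefix_nil, reduceCtorEq, false_iff,
          cons_prefix_cons]
        rintro ⟨⟨rfl, -⟩, rfl, -⟩
        exact hab rfl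

def commonSuffix (l t : List α) : List α := (commonPrefix l.reverse t.reverse).reverse

theorem suffix_commonSuffix_iff {s l t : List α} :
    s <:+ commonSuffix l t ↔ s <:+ l ∧ s <:+ t := by
  simp only [commonSuffix, ← reverse_prefix, reverse_reverse, prefix_commonPrefix_iff]

variable {l t : List α}

theorem commonSuffix_suffix_left : commonSuffix l t <:+ l :=
  (suffix_commonSuffix_iff.1 (suffix_refl _)).1

theorem commonSuffix_suffix_right : commonSuffix l t <:+ t :=
  (suffix_commonSuffix_iff.1 (suffix_refl _)).2

theorem commonSuffix_self (l : List α) : commonSuffix l l = l :=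
  commonSuffix_suffix_left.sublist.antisymm
    (suffix_commonSuffix_iff.2 ⟨suffix_refl l, suffix_refl l⟩).sublist

theorem length_commonSuffix_le_cons (x : α) :
    (commonSuffix l t).length ≤ (commonSuffix (x :: l) t).length :=
  (suffix_commonSuffix_iff.2
    ⟨commonSuffix_suffix_left.trans (suffix_cons x l), commonSuffix_suffix_right⟩).length_le

theorem length_commonSuffix_cons_le (x : α) :
    (commonSuffix (x :: l) t).length ≤ (commonSuffix l t).length + 1 := by
  rcases suffix_cons_iff.1 (commonSuffix_suffix_left (l := x :: l) (t := t)) with h | h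
  · have hl : l <:+ commonSuffix l t := suffix_commonSuffix_iff.2
      ⟨suffix_refl l, (suffix_cons x l).trans (h ▸ commonSuffix_suffix_right)⟩
    rw [h, length_cons]
    exact Nat.succ_le_succ hl.length_le
  · have := (suffix_commonSuffix_iff.2 ⟨h, commonSuffix_suffix_right⟩).length_le
    omega

theorem commonSuffix_drop_drop {a b : ℕ} (ha : a + (commonSuffix l t).length ≤ l.length)
    (hb : b + (commonSuffix l t).length ≤ t.length) :
    commonSuffix (l.drop a) (t.drop b) = commonSuffix l t := by
  refine Sublist.antisymm (IsSuffix.sublist ?_) (IsSuffix.sublist ?_)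
  · exact suffix_commonSuffix_iff.2
      ⟨commonSuffix_suffix_left.trans (drop_suffix a l),
        commonSuffix_suffix_right.trans (drop_suffix b t)⟩
  · refine suffix_commonSuffix_iff.2 ⟨?_, ?_⟩
    · exact suffix_of_suffix_length_le commonSuffix_suffix_left (drop_suffix a l)
        (by rw [length_drop]; omega)
    · exact suffix_of_suffix_length_le commonSuffix_suffix_right (drop_suffix b t)
        (by rw [length_drop]; omega)

theorem drop_eq_drop_of_le_length_commonSuffix {n : ℕ} (hlt : l.length = t.length)
    (h : l.length ≤ (commonSuffix l t).length + n) : l.drop n = t.drop n := by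
  have hl : l.drop n <:+ commonSuffix l t :=
    suffix_of_suffix_length_le (drop_suffix n l) commonSuffix_suffix_left
      (by rw [length_drop]; omega)
  have ht : t.drop n <:+ commonSuffix l t :=
    suffix_of_suffix_length_le (drop_suffix n t) commonSuffix_suffix_right
      (by rw [length_drop]; omega)
  exact (suffix_of_suffix_length_le hl ht (by simp [hlt])).eq_of_length (by simp [hlt])

end List

namespace CBTVertex

variable {H : ℕ}

/- Children are `x :: σ`, so the parent of a string is its tail, the ancestor `a` levels up is
`drop a`, and the last common ancestor of two vertices is their longest common suffix. -/
def ancestor (a : ℕ) (σ : CBTVertex H) : CBTVertex H :=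
  ⟨σ.val.drop a, (List.drop_sublist a σ.val).length_le.trans σ.2⟩

noncomputable def leaves (H : ℕ) : Finset (CBTVertex H) := Finset.univ.filter (·.val.length = H)

theorem mem_leaves {v : CBTVertex H} : v ∈ leaves H ↔ v.val.length = H := by
  simp [leaves]

theorem two_pow_le_card_leaves (H : ℕ) : 2 ^ H ≤ (leaves H).card := by
  let f (v : List.Vector Bool H) : CBTVertex H := ⟨v.1, v.2.le⟩
  have hinj : Set.InjOn f (Finset.univ : Finset (List.Vector Bool H)) :=
    fun v _ w _ h => Subtype.ext (congrArg Subtype.val h :)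
  simpa [card_vector] using
    Finset.card_le_card_of_injOn f (fun v _ => mem_leaves.2 v.2) hinj

theorem card_filter_drop_eq_le (u : CBTVertex H) (n : ℕ) :
    ((leaves H).filter fun v => v.val.drop n = u.val.drop n).card ≤ 2 ^ n := by
  set S := (leaves H).filter fun v => v.val.drop n = u.val.drop n
  have hmaps : Set.MapsTo (fun v : CBTVertex H => v.val.take n) S
      ((Finset.univ : Finset (List.Vector Bool (min n H))).image List.Vector.toList) :=
    fun v hv => by
      simp only [S, Finset.coe_filter, mem_leaves, Set.mem_ofPred_eq] at hv
      exact Finset.mem_image.2 ⟨⟨v.val.take n, by simp [hv.1]⟩, Finset.mem_univ _, rfl⟩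
  have hinj : Set.InjOn (fun v : CBTVertex H => v.val.take n) S := fun v hv w hw h => by
    simp only [S, Finset.coe_filter, Set.mem_ofPred_eq] at hv hw
    apply Subtype.ext
    rw [← List.take_append_drop n v.val, ← List.take_append_drop n w.val,
      show v.val.take n = w.val.take n from h, hv.2, hw.2]
  calc S.card ≤ _ := Finset.card_le_card_of_injOn _ hmaps hinj
    _ ≤ 2 ^ min n H := Finset.card_image_le.trans (by simp [card_vector])
    _ ≤ 2 ^ n := Nat.pow_le_pow_right two_pos (min_le_left n H)

end CBTVertex

namespace completeBinaryTree

open CBTVertex List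

variable {H : ℕ}

theorem exists_walk_of_suffix {σ τ : CBTVertex H} (h : τ.val <:+ σ.val) :
    ∃ p : (completeBinaryTree H).Walk σ τ, p.length = σ.val.length - τ.val.length := by
  obtain ⟨t, ht⟩ := h
  induction t generalizing σ with
  | nil =>
    obtain rfl : σ = τ := Subtype.ext ht.symm
    exact ⟨.nil, by simp⟩
  | cons x t ih =>
    have hσ := σ.2
    rw [← ht] at hσ
    let ρ : CBTVertex H := ⟨t ++ τ.val, by simp at hσ ⊢; omega⟩
    obtain ⟨p, hp⟩ := ih (σ := ρ) rfl
    have hσρ : (completeBinaryTree H).Adj σ ρ := Or.inr ⟨x, ht.symm⟩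
    refine ⟨.cons hσρ p, ?_⟩
    rw [SimpleGraph.Walk.length_cons, hp, ← ht]
    simp only [ρ, cons_append, length_cons, length_append]
    omega

theorem length_add_length_le_walk_length {σ τ : CBTVertex H}
    (p : (completeBinaryTree H).Walk σ τ) :
    σ.val.length + τ.val.length ≤ p.length + 2 * (commonSuffix σ.val τ.val).length := by
  induction p with
  | nil =>
    rw [SimpleGraph.Walk.length_nil, commonSuffix_self]
    omega
  | @cons σ ρ τ h p ih =>
    rw [SimpleGraph.Walk.length_cons]
    rcases h with ⟨x, hx⟩ | ⟨x, hx⟩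
    · have := length_commonSuffix_cons_le (l := σ.val) (t := τ.val) x
      rw [← hx] at this
      have : ρ.val.length = σ.val.length + 1 := by rw [hx, length_cons]
      omega
    · have := length_commonSuffix_le_cons (l := ρ.val) (t := τ.val) x
      rw [← hx] at this
      have : σ.val.length = ρ.val.length + 1 := by rw [hx, length_cons]
      omega

theorem dist_eq (σ τ : CBTVertex H) :
    (completeBinaryTree H).dist σ τ = (σ.val.length - (commonSuffix σ.val τ.val).length) +
      (τ.val.length - (commonSuffix σ.val τ.val).length) := by
  let ρ : CBTVertex H := ⟨commonSuffix σ.val τ.val, commonSuffix_suffix_left.length_le.trans σ.2⟩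
  obtain ⟨p, hp⟩ := exists_walk_of_suffix (σ := σ) (τ := ρ) commonSuffix_suffix_left
  obtain ⟨q, hq⟩ := exists_walk_of_suffix (σ := τ) (τ := ρ) commonSuffix_suffix_right
  have hup := SimpleGraph.dist_le (p.append q.reverse)
  rw [SimpleGraph.Walk.length_append, SimpleGraph.Walk.length_reverse, hp, hq] at hup
  obtain ⟨r, hr⟩ := (p.append q.reverse).reachable.exists_walk_length_eq_dist
  have hlow := length_add_length_le_walk_length r
  have hσ : (commonSuffix σ.val τ.val).length ≤ σ.val.length := commonSuffix_suffix_left.length_le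
  have hτ : (commonSuffix σ.val τ.val).length ≤ τ.val.length := commonSuffix_suffix_right.length_le
  have hρ : ρ.val.length = (commonSuffix σ.val τ.val).length := rfl
  omega

theorem dist_ancestor_ancestor {σ τ : CBTVertex H} {a b : ℕ}
    (ha : a + (commonSuffix σ.val τ.val).length ≤ σ.val.length)
    (hb : b + (commonSuffix σ.val τ.val).length ≤ τ.val.length) :
    (completeBinaryTree H).dist (σ.ancestor a) (τ.ancestor b) =
      (σ.val.length - (commonSuffix σ.val τ.val).length - a) +
        (τ.val.length - (commonSuffix σ.val τ.val).length - b) := by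
  rw [dist_eq]
  simp only [ancestor, commonSuffix_drop_drop ha hb, length_drop]
  omega

end completeBinaryTree

section FilterCoefficients

variable {ι R : Type*} [CommRing R]

def filterCoeff (lam : ι → R) (A : Finset ι) : R := ∏ ℓ ∈ A, -lam ℓ

variable [Fintype ι]

def autocovariance (β lam : ι → R) (d : ℕ) : R := ∑ ℓ, β ℓ ^ 2 * lam ℓ ^ d

variable [DecidableEq ι]

theorem sum_filterCoeff_mul_pow (lam : ι → R) (x : R) :
    ∑ A : Finset ι, filterCoeff lam A * x ^ (Fintype.card ι - A.card) = ∏ ℓ, (x - lam ℓ) := by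
  simp_rw [sub_eq_neg_add x, Fintype.prod_add, Finset.prod_const, Finset.card_compl, filterCoeff]

theorem sum_filterCoeff (lam : ι → R) :
    ∑ A : Finset ι, filterCoeff lam A = ∏ ℓ, (1 - lam ℓ) := by
  simpa using sum_filterCoeff_mul_pow lam 1

theorem sum_filterCoeff_mul_pow_eq_zero (lam : ι → R) (k : ι) {D : ℕ}
    (hD : Fintype.card ι ≤ D) :
    ∑ A : Finset ι, filterCoeff lam A * lam k ^ (D - A.card) = 0 := by
  have hsplit (A : Finset ι) : D - A.card = (D - Fintype.card ι) + (Fintype.card ι - A.card) := by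
    have := A.card_le_univ
    omega
  simp_rw [hsplit, pow_add, mul_left_comm _ (lam k ^ (D - Fintype.card ι)), ← Finset.mul_sum,
    sum_filterCoeff_mul_pow]
  exact mul_eq_zero_of_right _ (Finset.prod_eq_zero (Finset.mem_univ k) (sub_self _))

theorem sum_sum_filterCoeff_mul_autocovariance_eq_zero (β lam : ι → R) {D E : ℕ}
    (hD : Fintype.card ι ≤ D) (hE : Fintype.card ι ≤ E) :
    ∑ A : Finset ι, ∑ B : Finset ι, filterCoeff lam A * filterCoeff lam B *
      autocovariance β lam ((D - A.card) + (E - B.card)) = 0 := by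
  calc _ = ∑ A : Finset ι, ∑ B : Finset ι, ∑ ℓ, β ℓ ^ 2 *
        (filterCoeff lam A * lam ℓ ^ (D - A.card) *
          (filterCoeff lam B * lam ℓ ^ (E - B.card))) := by
        simp only [autocovariance, Finset.mul_sum, pow_add]
        exact Finset.sum_congr rfl fun A _ => Finset.sum_congr rfl fun B _ =>
          Finset.sum_congr rfl fun ℓ _ => by ring
    _ = ∑ ℓ, ∑ A : Finset ι, ∑ B : Finset ι, β ℓ ^ 2 *
        (filterCoeff lam A * lam ℓ ^ (D - A.card) *
          (filterCoeff lam B * lam ℓ ^ (E - B.card))) := by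
        exact (Finset.sum_congr rfl fun A _ => Finset.sum_comm).trans Finset.sum_comm
    _ = ∑ ℓ, β ℓ ^ 2 * ((∑ A : Finset ι, filterCoeff lam A * lam ℓ ^ (D - A.card)) *
        ∑ B : Finset ι, filterCoeff lam B * lam ℓ ^ (E - B.card)) := by
        simp_rw [Finset.sum_mul_sum, Finset.mul_sum]
    _ = 0 := by simp [sum_filterCoeff_mul_pow_eq_zero, hD, hE]

end FilterCoefficients

section Bounds

variable {ι : Type*} {β lam : ι → ℝ}

theorem abs_filterCoeff_le_one (hlam : ∀ ℓ, |lam ℓ| ≤ 1) (A : Finset ι) :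
    |filterCoeff lam A| ≤ 1 := by
  rw [filterCoeff, Finset.abs_prod]
  exact Finset.prod_le_one (fun ℓ _ => abs_nonneg _) fun ℓ _ => (abs_neg (lam ℓ)).trans_le (hlam ℓ)

variable [Fintype ι]

theorem abs_autocovariance_le (hlam : ∀ ℓ, |lam ℓ| ≤ 1) (d : ℕ) :
    |autocovariance β lam d| ≤ ∑ ℓ, β ℓ ^ 2 := by
  refine (Finset.abs_sum_le_sum_abs _ _).trans (Finset.sum_le_sum fun ℓ _ => ?_)
  rw [abs_mul, abs_pow, abs_pow, sq_abs]
  exact mul_le_of_le_one_right (sq_nonneg _) (pow_le_one₀ (abs_nonneg _) (hlam ℓ))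

theorem abs_sum_sum_filterCoeff_mul_autocovariance_le (hlam : ∀ ℓ, |lam ℓ| ≤ 1)
    (d : Finset ι → Finset ι → ℕ) :
    |∑ A : Finset ι, ∑ B : Finset ι, filterCoeff lam A * filterCoeff lam B *
      autocovariance β lam (d A B)| ≤ 4 ^ Fintype.card ι * ∑ ℓ, β ℓ ^ 2 := by
  have hterm (A B : Finset ι) :
      |filterCoeff lam A * filterCoeff lam B * autocovariance β lam (d A B)| ≤ ∑ ℓ, β ℓ ^ 2 := by
    rw [abs_mul, abs_mul]
    have hAB : |filterCoeff lam A| * |filterCoeff lam B| ≤ 1 :=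
      mul_le_one₀ (abs_filterCoeff_le_one hlam A) (abs_nonneg _) (abs_filterCoeff_le_one hlam B)
    exact (mul_le_mul hAB (abs_autocovariance_le hlam _) (abs_nonneg _) zero_le_one).trans_eq
      (one_mul _)
  calc _ ≤ ∑ A : Finset ι, ∑ B : Finset ι, ∑ ℓ, β ℓ ^ 2 :=
        (Finset.abs_sum_le_sum_abs _ _).trans <| Finset.sum_le_sum fun A _ =>
          (Finset.abs_sum_le_sum_abs _ _).trans <| Finset.sum_le_sum fun B _ => hterm A B
    _ = 4 ^ Fintype.card ι * ∑ ℓ, β ℓ ^ 2 := by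
        simp only [Finset.sum_const, Finset.card_univ, Fintype.card_finset, nsmul_eq_mul]
        rw [show (4 : ℝ) = 2 * 2 by norm_num, mul_pow]
        push_cast
        ring

end Bounds

namespace Matrix

variable {n : Type*} [Fintype n]

theorem PosSemidef.sq_dotProduct_mulVec_le {M : Matrix n n ℝ} (hM : M.PosSemidef) (x y : n → ℝ) :
    (x ⬝ᵥ M *ᵥ y) ^ 2 ≤ (x ⬝ᵥ M *ᵥ x) * (y ⬝ᵥ M *ᵥ y) := by
  have hsymm : y ⬝ᵥ M *ᵥ x = x ⬝ᵥ M *ᵥ y := by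
    rw [dotProduct_mulVec, ← vecMul_transpose, ← conjTranspose_eq_transpose_of_trivial,
      hM.isHermitian.eq, dotProduct_comm]
  have hquad : ∀ t : ℝ,
      0 ≤ (y ⬝ᵥ M *ᵥ y) * (t * t) + 2 * (x ⬝ᵥ M *ᵥ y) * t + x ⬝ᵥ M *ᵥ x := fun t => by
    have := hM.dotProduct_mulVec_nonneg (x + t • y)
    simp only [star_trivial, mulVec_add, mulVec_smul, dotProduct_add, add_dotProduct,
      dotProduct_smul, smul_dotProduct, smul_eq_mul, hsymm] at this
    linarith
  have := discrim_le_zero hquad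
  rw [discrim] at this
  nlinarith

theorem PosDef.inv_dotProduct_inv_mulVec_le [DecidableEq n] {M : Matrix n n ℝ} (hM : M.PosDef)
    {x w : n → ℝ} (hwx : w ⬝ᵥ x ≠ 0) :
    (x ⬝ᵥ M⁻¹ *ᵥ x)⁻¹ ≤ (w ⬝ᵥ M *ᵥ w) / (w ⬝ᵥ x) ^ 2 := by
  have hx : x ≠ 0 := by rintro rfl; simp at hwx
  have hpos : 0 < x ⬝ᵥ M⁻¹ *ᵥ x := by simpa using hM.inv.dotProduct_mulVec_pos hx
  have hMz : M *ᵥ (M⁻¹ *ᵥ x) = x := by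
    rw [mulVec_mulVec, mul_nonsing_inv _ ((isUnit_iff_isUnit_det M).1 hM.isUnit), one_mulVec]
  have hcs := hM.posSemidef.sq_dotProduct_mulVec_le w (M⁻¹ *ᵥ x)
  rw [hMz, dotProduct_comm (M⁻¹ *ᵥ x)] at hcs
  rw [le_div_iff₀ (sq_pos_of_ne_zero hwx), inv_mul_le_iff₀ hpos]
  linarith

theorem sum_single_dotProduct_mulVec_sum_single {ι κ R : Type*} [DecidableEq n] [CommSemiring R]
    (M : Matrix n n R) (s : Finset ι) (t : Finset κ) (f : ι → n) (g : κ → n) (a : ι → R)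
    (b : κ → R) :
    (∑ i ∈ s, Pi.single (f i) (a i)) ⬝ᵥ M *ᵥ ∑ j ∈ t, Pi.single (g j) (b j) =
      ∑ i ∈ s, ∑ j ∈ t, a i * b j * M (f i) (g j) := by
  simp only [sum_dotProduct, single_dotProduct, mulVec_sum, Finset.sum_apply, Finset.mul_sum,
    mulVec, dotProduct_single]
  exact Finset.sum_congr rfl fun i _ => Finset.sum_congr rfl fun j _ => by ring

end Matrix

theorem Finset.sum_sum_le_of_card_filter_ne_zero_le {ι : Type*} (s : Finset ι)
    (T : ι → ι → ℝ) {k : ℕ} {b : ℝ} (hcard : ∀ u ∈ s, (s.filter fun v => T u v ≠ 0).card ≤ k)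
    (hT : ∀ u ∈ s, ∀ v ∈ s, |T u v| ≤ b) :
    ∑ u ∈ s, ∑ v ∈ s, T u v ≤ s.card * (k * b) := by
  rw [← nsmul_eq_mul, ← Finset.sum_const]
  refine Finset.sum_le_sum fun u hu => ?_
  have hb : 0 ≤ b := (abs_nonneg _).trans (hT u hu u hu)
  rw [← Finset.sum_filter_ne_zero]
  calc _ ≤ ∑ v ∈ s.filter fun v => T u v ≠ 0, b := Finset.sum_le_sum fun v hv =>
        (le_abs_self _).trans (hT u hu v (Finset.mem_filter.1 hv).1)
    _ ≤ k * b := by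
        rw [Finset.sum_const, nsmul_eq_mul]
        exact mul_le_mul_of_nonneg_right (by exact_mod_cast hcard u hu) hb

namespace CBTVertex

open List

variable {ι : Type*} [Fintype ι] {H : ℕ}

noncomputable def covMatrix (β lam : ι → ℝ) (H : ℕ) : Matrix (CBTVertex H) (CBTVertex H) ℝ :=
  Matrix.of fun σ τ => autocovariance β lam ((completeBinaryTree H).dist σ τ)

noncomputable def filteredLeafVector (lam : ι → ℝ) (H : ℕ) : CBTVertex H → ℝ :=
  ∑ u ∈ leaves H, ∑ A : Finset ι, Pi.single (u.ancestor A.card) (filterCoeff lam A)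

noncomputable def filteredCov (β lam : ι → ℝ) (u v : CBTVertex H) : ℝ :=
  ∑ A : Finset ι, ∑ B : Finset ι, filterCoeff lam A * filterCoeff lam B *
    covMatrix β lam H (u.ancestor A.card) (v.ancestor B.card)

theorem filteredLeafVector_dotProduct_mulVec (β lam : ι → ℝ) (H : ℕ) :
    filteredLeafVector lam H ⬝ᵥ covMatrix β lam H *ᵥ filteredLeafVector lam H =
      ∑ u ∈ leaves H, ∑ v ∈ leaves H, filteredCov β lam u v := by
  rw [filteredLeafVector, sum_dotProduct]
  refine Finset.sum_congr rfl fun u _ => ?_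
  rw [Matrix.mulVec_sum, dotProduct_sum]
  exact Finset.sum_congr rfl fun v _ => Matrix.sum_single_dotProduct_mulVec_sum_single ..

theorem abs_filteredCov_le (β : ι → ℝ) {lam : ι → ℝ} (hlam : ∀ ℓ, |lam ℓ| ≤ 1)
    (u v : CBTVertex H) :
    |filteredCov β lam u v| ≤ 4 ^ Fintype.card ι * ∑ ℓ, β ℓ ^ 2 :=
  abs_sum_sum_filterCoeff_mul_autocovariance_le hlam
    fun A B => (completeBinaryTree H).dist (u.ancestor A.card) (v.ancestor B.card)

variable [DecidableEq ι]

theorem filteredLeafVector_dotProduct_one (lam : ι → ℝ) (H : ℕ) :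
    filteredLeafVector lam H ⬝ᵥ (fun _ => 1) = (leaves H).card * ∏ ℓ, (1 - lam ℓ) := by
  simp [filteredLeafVector, sum_dotProduct, sum_filterCoeff]

theorem filteredCov_eq_zero (β lam : ι → ℝ) {u v : CBTVertex H} (hu : u ∈ leaves H)
    (hv : v ∈ leaves H) (huv : u.val.drop (Fintype.card ι) ≠ v.val.drop (Fintype.card ι)) :
    filteredCov β lam u v = 0 := by
  rw [mem_leaves] at hu hv
  have hfar : (commonSuffix u.val v.val).length + Fintype.card ι < H := by
    by_contra! h
    exact huv (drop_eq_drop_of_le_length_commonSuffix (hu.trans hv.symm) (by omega))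
  have hdist (A B : Finset ι) :
      (completeBinaryTree H).dist (u.ancestor A.card) (v.ancestor B.card) =
        (H - (commonSuffix u.val v.val).length - A.card) +
          (H - (commonSuffix u.val v.val).length - B.card) := by
    have := A.card_le_univ
    have := B.card_le_univ
    rw [completeBinaryTree.dist_ancestor_ancestor (by omega) (by omega), hu, hv]
  simp only [filteredCov, covMatrix, Matrix.of_apply, hdist]
  exact sum_sum_filterCoeff_mul_autocovariance_eq_zero β lam (by omega) (by omega)

theorem card_filter_filteredCov_ne_zero_le (β lam : ι → ℝ) {u : CBTVertex H}
    (hu : u ∈ leaves H) :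
    ((leaves H).filter fun v => filteredCov β lam u v ≠ 0).card ≤ 2 ^ Fintype.card ι := by
  refine (Finset.card_le_card fun v hv => ?_).trans (card_filter_drop_eq_le u _)
  rw [Finset.mem_filter] at hv ⊢
  exact ⟨hv.1, not_not.1 fun h => hv.2 (filteredCov_eq_zero β lam hu hv.1 (Ne.symm h))⟩

theorem filteredLeafVector_dotProduct_mulVec_le (β : ι → ℝ) {lam : ι → ℝ}
    (hlam : ∀ ℓ, |lam ℓ| ≤ 1) (H : ℕ) :
    filteredLeafVector lam H ⬝ᵥ covMatrix β lam H *ᵥ filteredLeafVector lam H ≤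
      (leaves H).card * (2 ^ Fintype.card ι * (4 ^ Fintype.card ι * ∑ ℓ, β ℓ ^ 2)) := by
  rw [filteredLeafVector_dotProduct_mulVec]
  exact_mod_cast Finset.sum_sum_le_of_card_filter_ne_zero_le _ _
    (fun u hu => card_filter_filteredCov_ne_zero_le β lam hu)
    fun u _ v _ => abs_filteredCov_le β hlam u v

theorem gls_variance_le (β : ι → ℝ) {lam : ι → ℝ} (hlam : ∀ ℓ, lam ℓ ∈ Set.Ioo (-1 : ℝ) 1)
    (hPD : (covMatrix β lam H).PosDef) :
    ((fun _ => (1 : ℝ)) ⬝ᵥ (covMatrix β lam H)⁻¹ *ᵥ fun _ => 1)⁻¹ ≤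
      8 ^ Fintype.card ι * (∑ ℓ, β ℓ ^ 2) / (∏ ℓ, (1 - lam ℓ)) ^ 2 / 2 ^ H := by
  have habs (ℓ : ι) : |lam ℓ| ≤ 1 := abs_le.2 ⟨(hlam ℓ).1.le, (hlam ℓ).2.le⟩
  have hp : 0 < ∏ ℓ, (1 - lam ℓ) := Finset.prod_pos fun ℓ _ => sub_pos.2 (hlam ℓ).2
  have hL : (2 : ℝ) ^ H ≤ (leaves H).card := mod_cast two_pow_le_card_leaves H
  have hL0 : (0 : ℝ) < (leaves H).card := lt_of_lt_of_le (by positivity) hL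
  have hw1 := filteredLeafVector_dotProduct_one lam H
  calc _ ≤ _ := hPD.inv_dotProduct_inv_mulVec_le (by rw [hw1]; positivity)
    _ ≤ (leaves H).card * (2 ^ Fintype.card ι * (4 ^ Fintype.card ι * ∑ ℓ, β ℓ ^ 2)) /
          ((leaves H).card * ∏ ℓ, (1 - lam ℓ)) ^ 2 := by
        rw [hw1]
        gcongr
        exact filteredLeafVector_dotProduct_mulVec_le β habs H
    _ = 8 ^ Fintype.card ι * (∑ ℓ, β ℓ ^ 2) / (∏ ℓ, (1 - lam ℓ)) ^ 2 / (leaves H).card := by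
        field_simp
        rw [show (8 : ℝ) = 2 * 4 by norm_num, mul_pow]
        ring
    _ ≤ _ := by gcongr

end CBTVertex

theorem gls_variance_O_inverse_n_general (K : ℕ)
    (β lam : Fin (K - 1) → ℝ) (hlam : ∀ ℓ, lam ℓ ∈ Set.Ioo (-1 : ℝ) 1)
    (hPD : ∀ H : ℕ, 1 ≤ H →
      (Matrix.of fun σ τ : CBTVertex H =>
        ∑ ℓ, β ℓ ^ 2 * lam ℓ ^ ((completeBinaryTree H).dist σ τ)).PosDef) :
    ∃ C > (0 : ℝ), ∀ H : ℕ, 1 ≤ H →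
      ((fun _ => (1 : ℝ)) ⬝ᵥ
        ((Matrix.of fun σ τ : CBTVertex H =>
            ∑ ℓ, β ℓ ^ 2 * lam ℓ ^ ((completeBinaryTree H).dist σ τ))⁻¹
          *ᵥ fun _ => (1 : ℝ)))⁻¹
        ≤ C / ((2 : ℝ) ^ (H + 1) - 1) := by
  set B := 8 ^ (K - 1) * (∑ ℓ, β ℓ ^ 2) / (∏ ℓ, (1 - lam ℓ)) ^ 2
  have hB : 0 ≤ B := by positivity
  refine ⟨2 * B + 1, by positivity, fun H hH => ?_⟩
  have hden : (0 : ℝ) < 2 ^ (H + 1) - 1 := by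
    have := one_lt_pow₀ one_lt_two (by omega : H + 1 ≠ 0) (M₀ := ℝ)
    linarith
  calc _ ≤ B / 2 ^ H := by
        have := CBTVertex.gls_variance_le β hlam (hPD H hH)
        rwa [Fintype.card_fin] at this
    _ ≤ (2 * B + 1) / (2 ^ (H + 1) - 1) := by
        rw [div_le_div_iff₀ (by positivity) hden, pow_succ]
        nlinarith [pow_pos two_pos H (M₀ := ℝ)]

/-- Fix `K ≥ 2`, reals `β_2,…,β_K` and `λ_2,…,λ_K ∈ (-1,1)`, and set
`γ(d) = Σ_ℓ β_ℓ² λ_ℓ^d`.  For each depth `H ≥ 1`, let `Σ_H` be the matrix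
indexed by the vertices of the complete binary tree of depth `H`
(`n = 2^{H+1} − 1` vertices) with entries `γ(d(σ,τ))`; assume each `Σ_H` is
positive definite.  Then there is a constant `C > 0` (depending only on the
`β_ℓ` and `λ_ℓ`) with `(1ᵀ Σ_H⁻¹ 1)⁻¹ ≤ C/n` for all such `H`:
the variance of the GLS estimator decays like `O(n⁻¹)`. -/
theorem gls_variance_O_inverse_n (K : ℕ) (hK : 2 ≤ K)
    (β lam : Fin (K - 1) → ℝ) (hlam : ∀ ℓ, lam ℓ ∈ Set.Ioo (-1 : ℝ) 1)
    (hPD : ∀ H : ℕ, 1 ≤ H →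
      (Matrix.of fun σ τ : CBTVertex H =>
        ∑ ℓ, β ℓ ^ 2 * lam ℓ ^ ((completeBinaryTree H).dist σ τ)).PosDef) :
    ∃ C > (0 : ℝ), ∀ H : ℕ, 1 ≤ H →
      ((fun _ => (1 : ℝ)) ⬝ᵥ
        ((Matrix.of fun σ τ : CBTVertex H =>
            ∑ ℓ, β ℓ ^ 2 * lam ℓ ^ ((completeBinaryTree H).dist σ τ))⁻¹
          *ᵥ fun _ => (1 : ℝ)))⁻¹
        ≤ C / ((2 : ℝ) ^ (H + 1) - 1) :=
  gls_variance_O_inverse_n_general K β lam hlam hPD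
end

section
/- Under the DC-SBM setup, assume every row sum of B is positive, so that 𝒟_{ii} > 0 for all i, and set 𝒫 = 𝒟^{-1} 𝒜, m = 1_K^T B 1_K, π*_i = 𝒟_{ii}/m, and Π* = diag(π*_1,…,π*_N). Then Z^T Π* 𝒫 Z = B/m. Consequently, under the stationary (T,𝒫)-walk, the expected transition-frequency matrix Q between blocks, whose (u,v) entry is the probability that one step of the chain goes from a node in block u to a node in block v, satisfies Q = B/m. -/
open Matrix BigOperators

/-- In the DC-SBM setup with `𝒜 = Θ Z B Zᵀ Θ`, positive row sums of
`B`, `𝒟 = diag(row sums of 𝒜)`, `𝒫 = 𝒟⁻¹ 𝒜`, `m = 1ᵀ B 1`, `π*_i = 𝒟_{ii}/m`,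
and `Π* = diag(π*)`, one has `Zᵀ Π* 𝒫 Z = B/m`.  Consequently, the expected
block-to-block transition-frequency matrix `Q` of the stationary walk, with
`Q_{uv} = Σ_{i : z(i)=u} Σ_{j : z(j)=v} π*_i 𝒫_{ij}`, satisfies `Q = B/m`. -/
theorem dcsbm_expected_block_transitions (N K : ℕ) (z : Fin N → Fin K)
    (θ : Fin N → ℝ) (hθpos : ∀ i, 0 < θ i)
    (hθsum : ∀ u : Fin K, ∑ i, (if z i = u then θ i else 0) = 1)
    (B : Matrix (Fin K) (Fin K) ℝ) (hBsym : B.IsSymm) (hBnn : ∀ u v, 0 ≤ B u v)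
    (hBrow : ∀ u, 0 < ∑ v, B u v) :
    let Z : Matrix (Fin N) (Fin K) ℝ := Matrix.of fun i u => if z i = u then 1 else 0
    let Θ : Matrix (Fin N) (Fin N) ℝ := Matrix.diagonal θ
    let A : Matrix (Fin N) (Fin N) ℝ := Θ * Z * B * Zᵀ * Θ
    let D : Matrix (Fin N) (Fin N) ℝ := Matrix.diagonal (fun i => ∑ j, A i j)
    let P : Matrix (Fin N) (Fin N) ℝ := D⁻¹ * A
    let m : ℝ := ∑ u, ∑ v, B u v
    let πs : Fin N → ℝ := fun i => (∑ j, A i j) / m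
    let Pi : Matrix (Fin N) (Fin N) ℝ := Matrix.diagonal πs
    (Zᵀ * Pi * P * Z = m⁻¹ • B) ∧
    (∀ u v, (∑ i, ∑ j, (if z i = u then (1 : ℝ) else 0) *
        (if z j = v then (1 : ℝ) else 0) * (πs i * P i j)) = B u v / m) := by
  intro Z Θ A D P m πs Pi
  rcases Nat.eq_zero_or_pos K with hK | hK
  · subst hK
    constructor
    · ext u v; exact u.elim0
    · intro u; exact u.elim0
  have hKne : Nonempty (Fin K) := ⟨⟨0, hK⟩⟩
  have hm : 0 < m := Finset.sum_pos (fun u _ => hBrow u) Finset.univ_nonempty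
  -- entries of A
  have hA : ∀ i j, A i j = θ i * B (z i) (z j) * θ j := by
    intro i j
    show (Θ * Z * B * Zᵀ * Θ) i j = _
    rw [Matrix.mul_diagonal, Matrix.mul_assoc (Θ * Z) B Zᵀ, Matrix.mul_assoc Θ Z (B * Zᵀ),
      Matrix.diagonal_mul]
    congr 1
    rw [Matrix.mul_apply]
    have h1 : ∀ u, (B * Zᵀ) u j = B u (z j) := by
      intro u
      rw [Matrix.mul_apply]
      simp [Z, Matrix.transpose_apply, eq_comm]
    simp_rw [h1]
    simp [Z, eq_comm]
  -- row sums of A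
  have hrow : ∀ i, ∑ j, A i j = θ i * (∑ v, B (z i) v) := by
    intro i
    simp_rw [hA]
    have h2 : ∀ j : Fin N, θ i * B (z i) (z j) * θ j
        = ∑ v, (if z j = v then θ j else 0) * (θ i * B (z i) v) := by
      intro j
      rw [Finset.sum_eq_single (z j)]
      · rw [if_pos rfl]; ring
      · intro v _ hv
        rw [if_neg (fun h => hv h.symm), zero_mul]
      · intro h; exact absurd (Finset.mem_univ _) h
    simp_rw [h2]
    rw [Finset.sum_comm, Finset.mul_sum]
    refine Finset.sum_congr rfl fun v _ => ?_
    rw [← Finset.sum_mul, hθsum v, one_mul]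
  have hrowpos : ∀ i, 0 < ∑ j, A i j := by
    intro i; rw [hrow i]; exact mul_pos (hθpos i) (hBrow (z i))
  -- inverse of D
  have hD : D⁻¹ = Matrix.diagonal (fun i => (∑ j, A i j)⁻¹) := by
    refine Matrix.inv_eq_right_inv ?_
    show Matrix.diagonal _ * Matrix.diagonal _ = 1
    rw [Matrix.diagonal_mul_diagonal,
      show (fun i => (∑ j, A i j) * (∑ j, A i j)⁻¹) = fun _ => (1 : ℝ) from
        funext fun i => mul_inv_cancel₀ (hrowpos i).ne', Matrix.diagonal_one]
  have hP : ∀ i j, P i j = (∑ k, A i k)⁻¹ * A i j := by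
    intro i j
    show (D⁻¹ * A) i j = _
    rw [hD, Matrix.diagonal_mul]
  have hπP : ∀ i j, πs i * P i j = A i j / m := by
    intro i j
    rw [hP]
    have h0 : (∑ k, A i k) ≠ 0 := (hrowpos i).ne'
    show (∑ k, A i k) / m * ((∑ k, A i k)⁻¹ * A i j) = A i j / m
    field_simp
  -- core computation
  have key : ∀ u v, (∑ i, ∑ j, (if z i = u then (1 : ℝ) else 0) *
      (if z j = v then (1 : ℝ) else 0) * (πs i * P i j)) = B u v / m := by
    intro u v
    have h3 : ∀ i j, (if z i = u then (1 : ℝ) else 0) * (if z j = v then (1 : ℝ) else 0)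
        * (πs i * P i j)
        = (if z i = u then θ i else 0) * (if z j = v then θ j else 0) * (B u v / m) := by
      intro i j
      rw [hπP, hA]
      by_cases h1 : z i = u <;> by_cases h2 : z j = v <;> simp [h1, h2] <;> subst_vars <;> ring
    simp_rw [h3]
    have h4 : ∑ i, ∑ j, (if z i = u then θ i else 0) * (if z j = v then θ j else 0)
        * (B u v / m)
        = (∑ i, (if z i = u then θ i else 0)) * ((∑ j, (if z j = v then θ j else 0))
          * (B u v / m)) := by
      rw [Finset.sum_mul]
      refine Finset.sum_congr rfl fun i _ => ?_
      rw [Finset.sum_mul, Finset.mul_sum]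
      refine Finset.sum_congr rfl fun j _ => ?_
      ring
    rw [h4, hθsum, hθsum]; ring
  refine ⟨?_, key⟩
  ext u v
  have hkuv := key u v
  show (Zᵀ * Pi * P * Z) u v = (m⁻¹ • B) u v
  have hPiP : Pi * P = Matrix.of fun i j => πs i * P i j := by
    ext i j; exact Matrix.diagonal_mul _ _ _ _
  rw [Matrix.smul_apply, smul_eq_mul, inv_mul_eq_div, ← hkuv,
    Matrix.mul_assoc Zᵀ Pi P, hPiP]
  simp_rw [Matrix.mul_apply, Matrix.of_apply]
  rw [Finset.sum_comm]
  refine Finset.sum_congr rfl fun i _ => ?_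
  rw [Finset.sum_mul]
  refine Finset.sum_congr rfl fun j _ => ?_
  simp only [Z, Matrix.transpose_apply, Matrix.of_apply]
  ring
end

section
/- Under the DC-SBM setup, assume every row sum of B is positive, and set D_B = diag(B 1_K), B_L = D_B^{-1/2} B D_B^{-1/2}, and 𝒫 = 𝒟^{-1} 𝒜. Then for every real λ ≠ 0, λ is an eigenvalue of the K×K matrix B_L if and only if λ is an eigenvalue of the N×N matrix 𝒫; that is, the nonzero eigenvalues of B_L are identical to the nonzero eigenvalues of 𝒫. -/
open Matrix BigOperators

/-- In the DC-SBM setup with positive row sums of `B`,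
`D_B = diag(B 1)`, `B_L = D_B^{-1/2} B D_B^{-1/2}`, and `𝒫 = 𝒟⁻¹ 𝒜`, every
nonzero real `λ` is an eigenvalue of the `K×K` matrix `B_L` if and only if it
is an eigenvalue of the `N×N` matrix `𝒫`. -/
theorem dcsbm_nonzero_spectrum_eq (N K : ℕ) (z : Fin N → Fin K)
    (θ : Fin N → ℝ) (hθpos : ∀ i, 0 < θ i)
    (hθsum : ∀ u : Fin K, ∑ i, (if z i = u then θ i else 0) = 1)
    (B : Matrix (Fin K) (Fin K) ℝ) (hBsym : B.IsSymm) (hBnn : ∀ u v, 0 ≤ B u v)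
    (hBrow : ∀ u, 0 < ∑ v, B u v) :
    let Z : Matrix (Fin N) (Fin K) ℝ := Matrix.of fun i u => if z i = u then 1 else 0
    let Θ : Matrix (Fin N) (Fin N) ℝ := Matrix.diagonal θ
    let A : Matrix (Fin N) (Fin N) ℝ := Θ * Z * B * Zᵀ * Θ
    let D : Matrix (Fin N) (Fin N) ℝ := Matrix.diagonal (fun i => ∑ j, A i j)
    let P : Matrix (Fin N) (Fin N) ℝ := D⁻¹ * A
    let DBhalfInv : Matrix (Fin K) (Fin K) ℝ :=
      Matrix.diagonal (fun u => (Real.sqrt (∑ v, B u v))⁻¹)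
    let BL : Matrix (Fin K) (Fin K) ℝ := DBhalfInv * B * DBhalfInv
    ∀ lam : ℝ, lam ≠ 0 →
      ((∃ v : Fin K → ℝ, v ≠ 0 ∧ BL *ᵥ v = lam • v) ↔
       (∃ w : Fin N → ℝ, w ≠ 0 ∧ P *ᵥ w = lam • w)) := by
  intro Z Θ A D P DBhalfInv BL lam hlam
  have hθne : ∀ i, θ i ≠ 0 := fun i => (hθpos i).ne'
  set d : Fin K → ℝ := fun u => ∑ v, B u v with hd_def
  have hdapp : ∀ u, (∑ v, B u v) = d u := fun _ => rfl
  have hd : ∀ u, (0:ℝ) < d u := hBrow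
  have hdne : ∀ u, d u ≠ 0 := fun u => (hd u).ne'
  have hsd : ∀ u, (0:ℝ) < Real.sqrt (d u) := fun u => Real.sqrt_pos.2 (hd u)
  have hsdne : ∀ u, Real.sqrt (d u) ≠ 0 := fun u => (hsd u).ne'
  have hsq : ∀ u, Real.sqrt (d u) * Real.sqrt (d u) = d u :=
    fun u => Real.mul_self_sqrt (hd u).le
  have hsurj : ∀ u, ∃ i, z i = u := by
    intro u
    by_contra h
    push_neg at h
    have h1 := hθsum u
    rw [Finset.sum_eq_zero (fun i _ => if_neg (h i))] at h1
    exact one_ne_zero h1.symm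
  -- entries of A
  have hA : ∀ i j, A i j = θ i * (B (z i) (z j) * θ j) := by
    intro i j
    show (Θ * Z * B * Zᵀ * Θ) i j = _
    simp only [Θ, Z, Matrix.mul_apply, Matrix.diagonal_apply, Matrix.transpose_apply,
      Matrix.of_apply, mul_ite, ite_mul, one_mul, mul_one, mul_zero, zero_mul,
      Finset.sum_ite_eq, Finset.sum_ite_eq', Finset.mem_univ, if_true]
    have hcoll : ∀ x : Fin K,
        (∑ x_1 : Fin N, if z x_1 = x then if i = x_1 then θ i else 0 else 0)
          = if z i = x then θ i else 0 := by
      intro x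
      rw [Finset.sum_eq_single i]
      · simp
      · intro b _ hb
        by_cases h : z b = x <;> simp [h, Ne.symm hb]
      · intro h; exact absurd (Finset.mem_univ i) h
    simp only [hcoll, ite_mul, zero_mul, Finset.sum_ite_eq, Finset.mem_univ, if_true]
    ring
  -- block collapse lemmas
  have hcollapse : ∀ (g : Fin K → ℝ) (u : Fin K),
      (∑ j, if z j = u then θ j * g (z j) else 0) = g u := by
    intro g u
    have h1 : ∀ j, (if z j = u then θ j * g (z j) else 0)
        = (if z j = u then θ j else 0) * g u := by
      intro j; by_cases h : z j = u <;> simp [h, mul_comm]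
    rw [Finset.sum_congr rfl fun j _ => h1 j, ← Finset.sum_mul, hθsum u, one_mul]
  have hsum2 : ∀ (c : Fin K → ℝ) (w : Fin N → ℝ),
      (∑ j, c (z j) * (θ j * w j))
        = ∑ u, c u * ∑ j, (if z j = u then θ j * w j else 0) := by
    intro c w
    have h1 : ∀ u, c u * ∑ j, (if z j = u then θ j * w j else 0)
        = ∑ j, (if z j = u then c u * (θ j * w j) else 0) := by
      intro u; rw [Finset.mul_sum]
      exact Finset.sum_congr rfl fun j _ => by by_cases h : z j = u <;> simp [h]
    rw [Finset.sum_congr rfl fun u _ => h1 u, Finset.sum_comm]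
    exact Finset.sum_congr rfl fun j _ => by simp [Finset.sum_ite_eq]
  have hsum1 : ∀ (c : Fin K → ℝ), (∑ j, c (z j) * θ j) = ∑ u, c u := by
    intro c
    have h := hsum2 c (fun _ => 1)
    simpa [hθsum] using h
  -- row sums of A
  have hrow : ∀ i, (∑ j, A i j) = θ i * d (z i) := by
    intro i
    calc (∑ j, A i j) = ∑ j, θ i * (B (z i) (z j) * θ j) :=
          Finset.sum_congr rfl fun j _ => hA i j
      _ = θ i * ∑ j, B (z i) (z j) * θ j := by rw [Finset.mul_sum]
      _ = θ i * ∑ u, B (z i) u := by rw [hsum1 (fun u => B (z i) u)]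
      _ = θ i * d (z i) := by rw [hdapp]
  -- P as diagonal * A
  have hDinv : P = Matrix.diagonal (fun i => (θ i * d (z i))⁻¹) * A := by
    show D⁻¹ * A = _
    have hD : D = Matrix.diagonal (fun i => θ i * d (z i)) := by
      show Matrix.diagonal (fun i => ∑ j, A i j) = _
      rw [show (fun i => ∑ j, A i j) = fun i => θ i * d (z i) from funext hrow]
    have hone : Matrix.diagonal (fun i => θ i * d (z i))
        * Matrix.diagonal (fun i => (θ i * d (z i))⁻¹) = 1 := by
      rw [Matrix.diagonal_mul_diagonal]
      rw [show (fun i => (θ i * d (z i)) * (θ i * d (z i))⁻¹) = fun _ => (1:ℝ) from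
        funext fun i => mul_inv_cancel₀ (mul_ne_zero (hθne i) (hdne (z i)))]
      exact Matrix.diagonal_one
    rw [hD, Matrix.inv_eq_right_inv hone]
  -- action of P
  have hP : ∀ (w : Fin N → ℝ) (i), (P *ᵥ w) i
      = (d (z i))⁻¹ * ∑ u, B (z i) u * (∑ j, if z j = u then θ j * w j else 0) := by
    intro w i
    calc (P *ᵥ w) i = ∑ j, (θ i * d (z i))⁻¹ * A i j * w j := by
          rw [hDinv]
          simp only [Matrix.mulVec, dotProduct, Matrix.diagonal_mul]
      _ = (d (z i))⁻¹ * ∑ j, B (z i) (z j) * (θ j * w j) := by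
          conv_rhs => rw [Finset.mul_sum]
          refine Finset.sum_congr rfl fun j _ => ?_
          rw [hA]
          have h1 := hθne i
          have h2 := hdne (z i)
          field_simp
      _ = _ := by rw [hsum2 (fun u => B (z i) u) w]
  -- action of BL
  have hBLapply : ∀ (v : Fin K → ℝ) (u), (BL *ᵥ v) u
      = (Real.sqrt (d u))⁻¹ * ∑ t, B u t * ((Real.sqrt (d t))⁻¹ * v t) := by
    intro v u
    show ((DBhalfInv * B * DBhalfInv) *ᵥ v) u = _
    simp only [DBhalfInv, Matrix.mulVec, dotProduct, Matrix.mul_diagonal,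
      Matrix.diagonal_mul, hdapp]
    rw [Finset.mul_sum]
    exact Finset.sum_congr rfl fun t _ => by ring
  constructor
  · rintro ⟨v, hv, heq⟩
    have hS : ∀ u, (∑ t, B u t * ((Real.sqrt (d t))⁻¹ * v t))
        = lam * (Real.sqrt (d u) * v u) := by
      intro u
      have h := congrFun heq u
      rw [hBLapply] at h
      simp only [Pi.smul_apply, smul_eq_mul] at h
      calc (∑ t, B u t * ((Real.sqrt (d t))⁻¹ * v t))
          = Real.sqrt (d u) * ((Real.sqrt (d u))⁻¹
              * ∑ t, B u t * ((Real.sqrt (d t))⁻¹ * v t)) := by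
            rw [← mul_assoc, mul_inv_cancel₀ (hsdne u), one_mul]
        _ = Real.sqrt (d u) * (lam * v u) := by rw [h]
        _ = lam * (Real.sqrt (d u) * v u) := by ring
    refine ⟨fun i => (Real.sqrt (d (z i)))⁻¹ * v (z i), ?_, ?_⟩
    · obtain ⟨u, hu⟩ := Function.ne_iff.1 hv
      obtain ⟨i, hi⟩ := hsurj u
      intro h0
      have h := congrFun h0 i
      simp only [hi, Pi.zero_apply] at h
      rcases mul_eq_zero.1 h with h' | h'
      · exact hsdne u (inv_eq_zero.1 h')
      · exact hu h'
    · funext i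
      rw [hP]
      have hs : ∀ u, (∑ j, if z j = u then θ j * ((Real.sqrt (d (z j)))⁻¹ * v (z j)) else 0)
          = (Real.sqrt (d u))⁻¹ * v u :=
        fun u => hcollapse (fun t => (Real.sqrt (d t))⁻¹ * v t) u
      simp only [hs]
      rw [hS (z i)]
      simp only [Pi.smul_apply, smul_eq_mul]
      have h4 : (d (z i))⁻¹ = (Real.sqrt (d (z i)))⁻¹ * (Real.sqrt (d (z i)))⁻¹ := by
        rw [← mul_inv, hsq]
      rw [h4]
      calc (Real.sqrt (d (z i)))⁻¹ * (Real.sqrt (d (z i)))⁻¹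
            * (lam * (Real.sqrt (d (z i)) * v (z i)))
          = ((Real.sqrt (d (z i)))⁻¹ * Real.sqrt (d (z i)))
            * (lam * ((Real.sqrt (d (z i)))⁻¹ * v (z i))) := by ring
        _ = lam * ((Real.sqrt (d (z i)))⁻¹ * v (z i)) := by
            rw [inv_mul_cancel₀ (hsdne (z i)), one_mul]
  · rintro ⟨w, hw, heq⟩
    set s : Fin K → ℝ := fun u => ∑ j, if z j = u then θ j * w j else 0 with hs_def
    have heqP : ∀ i, (d (z i))⁻¹ * (∑ u, B (z i) u * s u) = lam * w i := by
      intro i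
      have h := congrFun heq i
      rw [hP] at h
      simpa using h
    have hwg : ∀ i, w i = lam⁻¹ * ((d (z i))⁻¹ * ∑ u, B (z i) u * s u) := by
      intro i
      rw [heqP i, ← mul_assoc, inv_mul_cancel₀ hlam, one_mul]
    have hg : ∀ u, s u = lam⁻¹ * ((d u)⁻¹ * ∑ t, B u t * s t) := by
      intro u
      calc s u = ∑ j, if z j = u then θ j * w j else 0 := rfl
        _ = ∑ j, if z j = u then
              θ j * (lam⁻¹ * ((d (z j))⁻¹ * ∑ t, B (z j) t * s t)) else 0 :=
            Finset.sum_congr rfl fun j _ => by rw [hwg j]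
        _ = lam⁻¹ * ((d u)⁻¹ * ∑ t, B u t * s t) :=
            hcollapse (fun u => lam⁻¹ * ((d u)⁻¹ * ∑ t, B u t * s t)) u
    have hBs : ∀ u, (∑ t, B u t * s t) = lam * (d u * s u) := by
      intro u
      have h := hg u
      calc (∑ t, B u t * s t)
          = (lam * lam⁻¹) * ((d u * (d u)⁻¹) * ∑ t, B u t * s t) := by
            rw [mul_inv_cancel₀ hlam, mul_inv_cancel₀ (hdne u), one_mul, one_mul]
        _ = lam * (d u * (lam⁻¹ * ((d u)⁻¹ * ∑ t, B u t * s t))) := by ring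
        _ = lam * (d u * s u) := by rw [← h]
    refine ⟨fun u => Real.sqrt (d u) * s u, ?_, ?_⟩
    · intro h0
      have hsz : ∀ u, s u = 0 := by
        intro u
        have h := congrFun h0 u
        simp only [Pi.zero_apply] at h
        rcases mul_eq_zero.1 h with h' | h'
        · exact absurd h' (hsdne u)
        · exact h'
      apply hw
      funext i
      rw [hwg i]
      simp [hsz]
    · funext u
      rw [hBLapply]
      simp only [Pi.smul_apply, smul_eq_mul]
      have h5 : ∀ t, B u t * ((Real.sqrt (d t))⁻¹ * (Real.sqrt (d t) * s t))
          = B u t * s t := by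
        intro t
        rw [← mul_assoc (Real.sqrt (d t))⁻¹, inv_mul_cancel₀ (hsdne t), one_mul]
      rw [Finset.sum_congr rfl fun t _ => h5 t, hBs u]
      have h4 : (Real.sqrt (d u))⁻¹ * d u = Real.sqrt (d u) := by
        rw [inv_mul_eq_iff_eq_mul₀ (hsdne u)]
        exact (hsq u).symm
      calc (Real.sqrt (d u))⁻¹ * (lam * (d u * s u))
          = lam * s u * ((Real.sqrt (d u))⁻¹ * d u) := by ring
        _ = lam * (Real.sqrt (d u) * s u) := by rw [h4]; ring
end

section
/- Under the DC-SBM setup, assume every row sum of B is positive, set D_B = diag(B 1_K), B_L = D_B^{-1/2} B D_B^{-1/2}, and 𝒫 = 𝒟^{-1} 𝒜, and let B_L = U Λ U^T be an eigendecomposition with U ∈ ℝ^{K×K} orthogonal and Λ diagonal. Then 𝒫 (Z D_B^{-1/2} U) = (Z D_B^{-1/2} U) Λ; that is, the columns of f* = √m · Z D_B^{-1/2} U are eigenvectors of 𝒫 with eigenvalues given by the diagonal of Λ, where m = 1_K^T B 1_K. -/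
/-!
Since the θ's sum to one on every block, `Zᵀ Θ Z = I`, hence `𝒜 Z = Θ Z B`. Applied to
`Z 1 = 1` this gives the degrees `𝒟 = Θ · diag(D_B ∘ z)`, so `𝒫 Z = Z D_B⁻¹ B`: the random walk
on the nodes projects to the random walk `D_B⁻¹ B` on the blocks. Writing
`D_B⁻¹ B = D_B^{-1/2} B_L D_B^{1/2}`, the eigenvectors `U` of `B_L` lift to `Z D_B^{-1/2} U`.
-/

open Matrix BigOperators

namespace Matrix

variable {ι κ : Type*} (R : Type*) [DecidableEq κ]

def membershipMatrix [Zero R] [One R] (z : ι → κ) : Matrix ι κ R :=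
  of fun i u => if z i = u then 1 else 0

variable {R} (z : ι → κ)

theorem membershipMatrix_mulVec [Fintype κ] [NonAssocSemiring R] (v : κ → R) :
    membershipMatrix R z *ᵥ v = v ∘ z := by
  ext i
  simp [membershipMatrix, mulVec, dotProduct]

theorem diagonal_comp_mul_membershipMatrix [Fintype ι] [Fintype κ] [NonAssocSemiring R]
    [DecidableEq ι] (d : κ → R) :
    diagonal (d ∘ z) * membershipMatrix R z = membershipMatrix R z * diagonal d := by
  ext i u
  by_cases h : z i = u <;> simp [membershipMatrix, h]

theorem transpose_membershipMatrix_mul_diagonal_mul_self [Fintype ι] [NonAssocSemiring R]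
    [DecidableEq ι] (θ : ι → R) (hθ : ∀ u, ∑ i, (if z i = u then θ i else 0) = 1) :
    (membershipMatrix R z)ᵀ * diagonal θ * membershipMatrix R z = 1 := by
  ext u v
  rw [mul_apply]
  simp only [mul_diagonal, transpose_apply, membershipMatrix, of_apply]
  by_cases h : u = v
  · subst h; simpa [ite_mul, ← ite_and] using hθ u
  · simp only [ite_mul, one_mul, zero_mul, one_apply_ne h]
    refine Finset.sum_eq_zero fun i _ => ?_
    by_cases hu : z i = u <;> simp [hu, h]

theorem inv_diagonal_of_ne_zero [Fintype ι] [DecidableEq ι] [Field R] {d : ι → R}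
    (hd : ∀ i, d i ≠ 0) :
    (diagonal d)⁻¹ = diagonal d⁻¹ :=
  inv_eq_left_inv <| by
    rw [diagonal_mul_diagonal, ← diagonal_one]
    exact congrArg diagonal (funext fun i => inv_mul_cancel₀ (hd i))

end Matrix

section DCSBM

variable {ι κ R : Type*} [Fintype ι] [DecidableEq ι] [Fintype κ] [DecidableEq κ]

def dcsbmAdj [Semiring R] (z : ι → κ) (θ : ι → R) (B : Matrix κ κ R) : Matrix ι ι R :=
  diagonal θ * membershipMatrix R z * B * (membershipMatrix R z)ᵀ * diagonal θ

variable {z : ι → κ} {θ : ι → R} (B : Matrix κ κ R)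

theorem dcsbmAdj_mul_membershipMatrix [Semiring R]
    (hθ : ∀ u, ∑ i, (if z i = u then θ i else 0) = 1) :
    dcsbmAdj z θ B * membershipMatrix R z = diagonal θ * membershipMatrix R z * B := by
  rw [dcsbmAdj, Matrix.mul_assoc _ (diagonal θ), Matrix.mul_assoc _ (_ᵀ),
    ← Matrix.mul_assoc (_ᵀ), transpose_membershipMatrix_mul_diagonal_mul_self z θ hθ,
    Matrix.mul_one]

theorem dcsbmAdj_rowSum [Semiring R] (hθ : ∀ u, ∑ i, (if z i = u then θ i else 0) = 1) :
    (fun i => ∑ j, dcsbmAdj z θ B i j) = θ * (fun u => ∑ v, B u v) ∘ z := by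
  have hZ1 : membershipMatrix R z *ᵥ 1 = 1 := membershipMatrix_mulVec z 1
  calc (fun i => ∑ j, dcsbmAdj z θ B i j)
      = dcsbmAdj z θ B *ᵥ (membershipMatrix R z *ᵥ 1) := by
        ext i; rw [hZ1]; exact (dotProduct_one _).symm
    _ = θ * (fun u => ∑ v, B u v) ∘ z := by
        rw [mulVec_mulVec, dcsbmAdj_mul_membershipMatrix B hθ, ← mulVec_mulVec,
          ← mulVec_mulVec, membershipMatrix_mulVec]
        ext i
        simp [mulVec, dotProduct_one]

theorem inv_diagonal_rowSum_mul_dcsbmAdj_mul_membershipMatrix [Field R]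
    (hθ : ∀ u, ∑ i, (if z i = u then θ i else 0) = 1) (hθ0 : ∀ i, θ i ≠ 0)
    (hB : ∀ u, ∑ v, B u v ≠ 0) :
    (diagonal fun i => ∑ j, dcsbmAdj z θ B i j)⁻¹ * dcsbmAdj z θ B * membershipMatrix R z =
      membershipMatrix R z * (diagonal (fun u => (∑ v, B u v)⁻¹) * B) := by
  have hdeg : ∀ i, (θ * (fun u => ∑ v, B u v) ∘ z) i ≠ 0 := fun i => mul_ne_zero (hθ0 i) (hB _)
  have hscale : (diagonal (θ * (fun u => ∑ v, B u v) ∘ z))⁻¹ * diagonal θ =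
      diagonal ((fun u => (∑ v, B u v)⁻¹) ∘ z) := by
    rw [inv_diagonal_of_ne_zero hdeg, diagonal_mul_diagonal]
    congr 1
    ext i
    simp [hθ0 i]
  rw [dcsbmAdj_rowSum B hθ, Matrix.mul_assoc, dcsbmAdj_mul_membershipMatrix B hθ,
    ← Matrix.mul_assoc, ← Matrix.mul_assoc, hscale, diagonal_comp_mul_membershipMatrix,
    Matrix.mul_assoc]

end DCSBM

theorem dcsbm_eigenvectors_of_P_general (N K : ℕ) (z : Fin N → Fin K)
    (θ : Fin N → ℝ) (hθpos : ∀ i, 0 < θ i)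
    (hθsum : ∀ u : Fin K, ∑ i, (if z i = u then θ i else 0) = 1)
    (B : Matrix (Fin K) (Fin K) ℝ)
    (hBrow : ∀ u, 0 < ∑ v, B u v)
    (U : Matrix (Fin K) (Fin K) ℝ) (hU : Uᵀ * U = 1) (Λd : Fin K → ℝ) :
    let Z : Matrix (Fin N) (Fin K) ℝ := Matrix.of fun i u => if z i = u then 1 else 0
    let Θ : Matrix (Fin N) (Fin N) ℝ := Matrix.diagonal θ
    let A : Matrix (Fin N) (Fin N) ℝ := Θ * Z * B * Zᵀ * Θ
    let D : Matrix (Fin N) (Fin N) ℝ := Matrix.diagonal (fun i => ∑ j, A i j)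
    let P : Matrix (Fin N) (Fin N) ℝ := D⁻¹ * A
    let DBhalfInv : Matrix (Fin K) (Fin K) ℝ :=
      Matrix.diagonal (fun u => (Real.sqrt (∑ v, B u v))⁻¹)
    let BL : Matrix (Fin K) (Fin K) ℝ := DBhalfInv * B * DBhalfInv
    BL = U * Matrix.diagonal Λd * Uᵀ →
      P * (Z * DBhalfInv * U) = Z * DBhalfInv * U * Matrix.diagonal Λd := by
  intro Z Θ A D P DBhalfInv BL hBL
  have hPZ : P * Z = Z * (diagonal (fun u => (∑ v, B u v)⁻¹) * B) :=
    inv_diagonal_rowSum_mul_dcsbmAdj_mul_membershipMatrix B hθsum (fun i => (hθpos i).ne')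
      (fun u => (hBrow u).ne')
  have hsq : DBhalfInv * DBhalfInv = diagonal fun u => (∑ v, B u v)⁻¹ := by
    rw [diagonal_mul_diagonal]
    congr 1
    ext u
    rw [← mul_inv, Real.mul_self_sqrt (hBrow u).le]
  have hBLU : BL * U = U * diagonal Λd := by
    rw [hBL, Matrix.mul_assoc, hU, Matrix.mul_one]
  calc P * (Z * DBhalfInv * U) = P * Z * (DBhalfInv * U) := by simp only [Matrix.mul_assoc]
    _ = Z * DBhalfInv * (BL * U) := by rw [hPZ, ← hsq]; simp only [BL, Matrix.mul_assoc]
    _ = Z * DBhalfInv * U * diagonal Λd := by rw [hBLU]; simp only [Matrix.mul_assoc]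

/-- In the DC-SBM setup with positive row sums of `B`, if
`B_L = D_B^{-1/2} B D_B^{-1/2} = U Λ Uᵀ` is an eigendecomposition with `U`
orthogonal and `Λ` diagonal, then `𝒫 (Z D_B^{-1/2} U) = (Z D_B^{-1/2} U) Λ`:
the columns of `f* = √m · Z D_B^{-1/2} U` are eigenvectors of `𝒫 = 𝒟⁻¹ 𝒜`
with eigenvalues the diagonal of `Λ`. -/
theorem dcsbm_eigenvectors_of_P (N K : ℕ) (z : Fin N → Fin K)
    (θ : Fin N → ℝ) (hθpos : ∀ i, 0 < θ i)
    (hθsum : ∀ u : Fin K, ∑ i, (if z i = u then θ i else 0) = 1)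
    (B : Matrix (Fin K) (Fin K) ℝ) (hBsym : B.IsSymm) (hBnn : ∀ u v, 0 ≤ B u v)
    (hBrow : ∀ u, 0 < ∑ v, B u v)
    (U : Matrix (Fin K) (Fin K) ℝ) (hU : Uᵀ * U = 1) (Λd : Fin K → ℝ) :
    let Z : Matrix (Fin N) (Fin K) ℝ := Matrix.of fun i u => if z i = u then 1 else 0
    let Θ : Matrix (Fin N) (Fin N) ℝ := Matrix.diagonal θ
    let A : Matrix (Fin N) (Fin N) ℝ := Θ * Z * B * Zᵀ * Θ
    let D : Matrix (Fin N) (Fin N) ℝ := Matrix.diagonal (fun i => ∑ j, A i j)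
    let P : Matrix (Fin N) (Fin N) ℝ := D⁻¹ * A
    let DBhalfInv : Matrix (Fin K) (Fin K) ℝ :=
      Matrix.diagonal (fun u => (Real.sqrt (∑ v, B u v))⁻¹)
    let BL : Matrix (Fin K) (Fin K) ℝ := DBhalfInv * B * DBhalfInv
    BL = U * Matrix.diagonal Λd * Uᵀ →
      P * (Z * DBhalfInv * U) = Z * DBhalfInv * U * Matrix.diagonal Λd :=
  dcsbm_eigenvectors_of_P_general N K z θ hθpos hθsum B hBrow U hU Λd
end

section
/- Let T be a finite tree with vertex set V of size n. Let β_2,…,β_N be real numbers, not all zero, and let λ_2,…,λ_N ∈ [0,1). Define γ(d) = Σ_{ℓ=2}^N β_ℓ² λ_ℓ^d and λ_auto = γ(1)/γ(0). Then Σ_{σ ∈ V} Σ_{τ ∈ V} γ(d(σ,τ)) ≥ γ(0) · Σ_{σ ∈ V} Σ_{τ ∈ V} λ_auto^{d(σ,τ)}, with equality when γ(d) = β² λ^d is rank-two (i.e., exactly one β_ℓ is nonzero). -/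
open BigOperators

/-- For a finite tree `T` on vertex set `V`, reals `β_2,…,β_N` not
all zero, `λ_2,…,λ_N ∈ [0,1)`, `γ(d) = Σ_ℓ β_ℓ² λ_ℓ^d`, and
`λ_auto = γ(1)/γ(0)`, one has
`Σ_{σ,τ} γ(d(σ,τ)) ≥ γ(0) Σ_{σ,τ} λ_auto^{d(σ,τ)}`,
with equality when exactly one `β_ℓ` is nonzero (the rank-two case). -/
theorem rank_two_approx_understates_dependence {V : Type*} [Fintype V]
    (G : SimpleGraph V) (hG : G.IsTree)
    (n : ℕ) (β lam : Fin n → ℝ) (hβ : ∃ ℓ, β ℓ ≠ 0)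
    (hlam : ∀ ℓ, lam ℓ ∈ Set.Ico (0 : ℝ) 1) :
    let γ : ℕ → ℝ := fun d => ∑ ℓ, β ℓ ^ 2 * lam ℓ ^ d
    let lamAuto : ℝ := γ 1 / γ 0
    (γ 0 * ∑ σ : V, ∑ τ : V, lamAuto ^ (G.dist σ τ)
        ≤ ∑ σ : V, ∑ τ : V, γ (G.dist σ τ)) ∧
    (∀ ℓ₀, β ℓ₀ ≠ 0 → (∀ ℓ, ℓ ≠ ℓ₀ → β ℓ = 0) →
      ∑ σ : V, ∑ τ : V, γ (G.dist σ τ)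
        = γ 0 * ∑ σ : V, ∑ τ : V, lamAuto ^ (G.dist σ τ)) := by
  intro γ lamAuto
  have hγ0eq : γ 0 = ∑ ℓ, β ℓ ^ 2 := by simp [γ]
  have hγ0 : 0 < γ 0 := by
    obtain ⟨ℓ, hℓ⟩ := hβ
    rw [hγ0eq]
    exact Finset.sum_pos' (fun i _ => sq_nonneg _)
      ⟨ℓ, Finset.mem_univ _, by positivity⟩
  have key : ∀ d : ℕ, γ 0 * lamAuto ^ d ≤ γ d := by
    intro d
    have hw : ∑ ℓ, β ℓ ^ 2 / γ 0 = 1 := by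
      rw [← Finset.sum_div, ← hγ0eq, div_self hγ0.ne']
    have h := Real.pow_arith_mean_le_arith_mean_pow Finset.univ
      (fun ℓ => β ℓ ^ 2 / γ 0) lam
      (fun i _ => by positivity) hw (fun i _ => (hlam i).1) d
    have h1 : lamAuto = ∑ ℓ, (β ℓ ^ 2 / γ 0) * lam ℓ := by
      show γ 1 / γ 0 = _
      rw [Finset.sum_div (f := fun ℓ => β ℓ ^ 2 * lam ℓ ^ 1)]
      · congr 1; ext ℓ; ring
    have h2 : γ d = ∑ ℓ, γ 0 * ((β ℓ ^ 2 / γ 0) * lam ℓ ^ d) := by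
      show (∑ ℓ, β ℓ ^ 2 * lam ℓ ^ d) = _
      congr 1; ext ℓ
      field_simp
    rw [h1, h2, ← Finset.mul_sum]
    exact mul_le_mul_of_nonneg_left h hγ0.le
  constructor
  · calc γ 0 * ∑ σ : V, ∑ τ : V, lamAuto ^ (G.dist σ τ)
        = ∑ σ : V, ∑ τ : V, γ 0 * lamAuto ^ (G.dist σ τ) := by
          simp [Finset.mul_sum]
      _ ≤ ∑ σ : V, ∑ τ : V, γ (G.dist σ τ) :=
          Finset.sum_le_sum fun σ _ => Finset.sum_le_sum fun τ _ => key _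
  · intro ℓ₀ h0 hall
    have hγ : ∀ d : ℕ, γ d = β ℓ₀ ^ 2 * lam ℓ₀ ^ d := by
      intro d
      refine Finset.sum_eq_single ℓ₀ (fun b _ hb => by rw [hall b hb]; ring)
        (fun h => absurd (Finset.mem_univ ℓ₀) h)
    have hla : lamAuto = lam ℓ₀ := by
      show γ 1 / γ 0 = lam ℓ₀
      rw [hγ 1, hγ 0, pow_zero, mul_one, pow_one]
      field_simp
    have : ∀ d : ℕ, γ d = γ 0 * lamAuto ^ d := by
      intro d
      rw [hla, hγ d, hγ 0, pow_zero, mul_one]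
    rw [Finset.mul_sum]
    refine Finset.sum_congr rfl fun σ _ => ?_
    rw [Finset.mul_sum]
    exact Finset.sum_congr rfl fun τ _ => this _
end
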